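/- arXiv:1310.8061 — 3 statements merged into one kernel-verified Lean document; each statement's English description precedes it below -/
import Mathlib

section
/- Let {φ_r}_{0<r<1} ⊂ L^∞(𝕋) be an approximation of identity: (1) ∫_𝕋 φ_r → 1 as r → 1; (2) φ_r*(x) := sup_{|x|≤|t|≤π} |φ_r(t)| → 0 as r → 1 for each 0 < |x| < π; (3) sup_{0<r<1} ∫_𝕋 φ_r*(x) dx < ∞. Let λ(r) ↘ 0 satisfy limsup_{r→1} λ(r)·‖φ_r‖_∞ < ∞. If f ∈ L^1(𝕋) and x₀ is a Lebesgue point of f (i.e., (1/2h)∫_{-h}^{h} |f(x₀+t) - f(x₀)| dt → 0 as h → 0), then lim_{r→1} sup_{|θ-x₀|≤λ(r)} |∫_𝕋 φ_r(θ-t) f(t) dt - f(x₀)| = 0. -/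
open MeasureTheory Real Set Filter Topology
open scoped ENNReal NNReal

/-- The `L^∞` norm of a kernel on the circle `𝕋 = [-π, π)`. -/
noncomputable def supNorm04 (φ : ℝ → ℝ) : ℝ :=
  (eLpNorm φ ⊤ (volume.restrict (Set.Ioc (-π) π))).toReal

/-- The symmetric decreasing majorant `φ*(x) = sup_{|x| ≤ |t| ≤ π} |φ(t)|`. -/
noncomputable def symMaj04 (φ : ℝ → ℝ) (x : ℝ) : ℝ :=
  sSup {s : ℝ | ∃ t, |x| ≤ |t| ∧ |t| ≤ π ∧ s = |φ t|}

section Helpers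

variable {φ : ℝ → ℝ} {M : ℝ}

lemma symMaj04_bddAbove (hM : ∀ t, |φ t| ≤ M) (x : ℝ) :
    BddAbove {s : ℝ | ∃ t, |x| ≤ |t| ∧ |t| ≤ π ∧ s = |φ t|} :=
  ⟨M, fun s hs => by obtain ⟨t, _, _, rfl⟩ := hs; exact hM t⟩

lemma le_symMaj04 (hM : ∀ t, |φ t| ≤ M) {x t : ℝ} (hxt : |x| ≤ |t|) (ht : |t| ≤ π) :
    |φ t| ≤ symMaj04 φ x :=
  le_csSup (symMaj04_bddAbove hM x) ⟨t, hxt, ht, rfl⟩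

lemma symMaj04_nonneg (hM : ∀ t, |φ t| ≤ M) {x : ℝ} (hx : |x| ≤ π) : 0 ≤ symMaj04 φ x :=
  (abs_nonneg _).trans (le_symMaj04 hM le_rfl hx)

lemma symMaj04_anti (hM : ∀ t, |φ t| ≤ M) {x y : ℝ} (hxy : |x| ≤ |y|) (hy : |y| ≤ π) :
    symMaj04 φ y ≤ symMaj04 φ x := by
  refine csSup_le ⟨|φ y|, ⟨y, le_rfl, hy, rfl⟩⟩ (fun s hs => ?_)
  obtain ⟨t, h1, h2, rfl⟩ := hs
  exact le_csSup (symMaj04_bddAbove hM x) ⟨t, hxy.trans h1, h2, rfl⟩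

lemma symMaj04_antitoneOn (hM : ∀ t, |φ t| ≤ M) : AntitoneOn (symMaj04 φ) (Icc 0 π) :=
  fun x hx y hy hxy => symMaj04_anti hM
    (by rw [abs_of_nonneg hx.1, abs_of_nonneg (hx.1.trans hxy)]; exact hxy)
    (by rw [abs_of_nonneg (hx.1.trans hxy)]; exact hy.2)

lemma II_ends {f : ℝ → ℝ} {a b a' b' : ℝ} (h : IntervalIntegrable f volume a b)
    (ha : a = a') (hb : b = b') : IntervalIntegrable f volume a' b' := ha ▸ hb ▸ h

lemma periodic_intervalIntegrable {f : ℝ → ℝ} (hper : Function.Periodic f (2*π))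
    (hint : IntervalIntegrable f volume (-π) π) :
    ∀ a b : ℝ, IntervalIntegrable f volume a b := by
  have hshift : ∀ k : ℤ, IntervalIntegrable f volume (-π + k*(2*π)) (π + k*(2*π)) := by
    intro k
    have h1 := hint.comp_sub_right ((k : ℝ)*(2*π))
    have h2 : (fun x => f (x - (k:ℝ)*(2*π))) = f := by
      funext x; exact hper.sub_int_mul_eq k
    rwa [h2] at h1
  have key : ∀ n : ℕ, IntervalIntegrable f volume (-π - n*(2*π)) (π + n*(2*π)) := by
    intro n
    induction n with
    | zero => simpa using hint
    | succ n ih =>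
      have hl : IntervalIntegrable f volume (-π - ((n:ℝ)+1)*(2*π)) (-π - (n:ℝ)*(2*π)) :=
        II_ends (hshift (-(n+1))) (by push_cast; ring) (by push_cast; ring)
      have hr : IntervalIntegrable f volume (π + (n:ℝ)*(2*π)) (π + ((n:ℝ)+1)*(2*π)) :=
        II_ends (hshift (n+1)) (by push_cast; ring) (by push_cast; ring)
      push_cast
      exact (hl.trans ih).trans hr
  intro a b
  obtain ⟨n, hn⟩ := exists_nat_ge (|a| + |b| + π)
  have hπ : (1:ℝ) ≤ 2*π := by nlinarith [Real.pi_gt_three]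
  have hna : (n:ℝ) ≤ n * (2*π) := by nlinarith [Nat.cast_nonneg (α := ℝ) n]
  refine (key n).mono_set ?_
  have h1 : -π - n*(2*π) ≤ min a b := by
    have ha : -(|a|+|b|+π) ≤ a := by nlinarith [abs_nonneg a, abs_nonneg b, Real.pi_pos, neg_abs_le a]
    have hb : -(|a|+|b|+π) ≤ b := by nlinarith [abs_nonneg a, abs_nonneg b, Real.pi_pos, neg_abs_le b]
    have := le_min ha hb
    nlinarith [Real.pi_pos]
  have h2 : max a b ≤ π + n*(2*π) := by
    have : max a b ≤ |a|+|b|+π := by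
      refine max_le ?_ ?_ <;> nlinarith [abs_nonneg a, abs_nonneg b, Real.pi_pos, le_abs_self a, le_abs_self b]
    nlinarith [Real.pi_pos]
  rw [Set.uIcc_subset_uIcc_iff_le]
  have hle : -π - n*(2*π) ≤ π + n*(2*π) := by nlinarith [Real.pi_pos, Nat.cast_nonneg (α := ℝ) n]
  constructor
  · rw [min_eq_left hle]; exact h1
  · rw [max_eq_right hle]; exact h2

lemma bdd_mul_intervalIntegrable {φ h : ℝ → ℝ} (hm : Measurable φ) {M : ℝ}
    (hM : ∀ t, |φ t| ≤ M) {a b : ℝ} (hh : IntervalIntegrable h volume a b) :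
    IntervalIntegrable (fun t => φ t * h t) volume a b := by
  refine (hh.const_mul M).mono_fun
    (hm.aestronglyMeasurable.restrict.mul hh.def'.aestronglyMeasurable) ?_
  refine Filter.Eventually.of_forall (fun t => ?_)
  simp only [Real.norm_eq_abs, abs_mul]
  exact mul_le_mul_of_nonneg_right ((hM t).trans (le_abs_self M)) (abs_nonneg _)

lemma antitoneOn_mul_intervalIntegrable {ψ G : ℝ → ℝ} {a δ : ℝ} (haδ : a ≤ δ)
    (hψa : AntitoneOn ψ (Icc a δ)) (hψ0 : ∀ x ∈ Icc a δ, 0 ≤ ψ x)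
    (hGint : ∀ p q : ℝ, IntervalIntegrable G volume p q) :
    ∀ p q : ℝ, a ≤ p → p ≤ q → q ≤ δ →
      IntervalIntegrable (fun t => ψ t * G t) volume p q := by
  intro p q hp hpq hq
  have hψint : IntervalIntegrable ψ volume p q :=
    (hψa.mono (by rw [Set.uIcc_of_le hpq]; exact Set.Icc_subset_Icc hp hq)).intervalIntegrable
  refine ((hGint p q).abs.const_mul (ψ a)).mono_fun
    (hψint.def'.aestronglyMeasurable.mul (hGint p q).def'.aestronglyMeasurable) ?_
  rw [Set.uIoc_of_le hpq]
  refine (ae_restrict_iff' measurableSet_Ioc).mpr (Filter.Eventually.of_forall (fun t ht => ?_))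
  have htmem : t ∈ Icc a δ := ⟨hp.trans ht.1.le, ht.2.trans hq⟩
  have hψt0 : 0 ≤ ψ t := hψ0 t htmem
  have hψles : ψ t ≤ ψ a := hψa ⟨le_rfl, haδ⟩ htmem (hp.trans ht.1.le)
  have hψa0 : 0 ≤ ψ a := hψ0 a ⟨le_rfl, haδ⟩
  simp only [Real.norm_eq_abs, abs_mul, abs_of_nonneg hψt0, abs_of_nonneg hψa0, abs_abs]
  exact mul_le_mul_of_nonneg_right hψles (abs_nonneg _)

lemma dyadic_bound {ψ G : ℝ → ℝ} {a δ ε' C₃ : ℝ}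
    (ha : 0 < a) (haδ : a ≤ δ)
    (hψa : AntitoneOn ψ (Icc 0 δ))
    (hψ0 : ∀ x ∈ Icc (0:ℝ) δ, 0 ≤ ψ x)
    (hG0 : ∀ t, 0 ≤ G t)
    (hGint : ∀ p q : ℝ, IntervalIntegrable G volume p q)
    (hε' : 0 ≤ ε')
    (hH : ∀ b ∈ Icc a δ, (∫ t in a..b, G t) ≤ 4*ε'*b)
    (hC₃ : (∫ t in (0:ℝ)..δ, ψ t) ≤ C₃) :
    (∫ t in a..δ, ψ t * G t) ≤ 16*ε'*C₃ := by
  have hδ0 : 0 < δ := ha.trans_le haδ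
  have hpow : ∀ n : ℕ, (1:ℝ) ≤ 2^n := fun n => one_le_pow₀ one_le_two
  have hdiv : ∀ {m n : ℕ}, m ≤ n → δ/2^n ≤ δ/2^m := fun {m n} h =>
    div_le_div_of_nonneg_left hδ0.le (by positivity) (pow_le_pow_right₀ one_le_two h)
  have hdivδ : ∀ n : ℕ, δ/2^n ≤ δ := fun n => by
    have := hdiv (Nat.zero_le n); simpa using this
  have hψint : ∀ p q : ℝ, 0 ≤ p → p ≤ q → q ≤ δ → IntervalIntegrable ψ volume p q := by
    intro p q hp hpq hq
    exact (hψa.mono (by rw [Set.uIcc_of_le hpq]; exact Set.Icc_subset_Icc hp hq)).intervalIntegrable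
  have hψG : ∀ p q : ℝ, a ≤ p → p ≤ q → q ≤ δ →
      IntervalIntegrable (fun t => ψ t * G t) volume p q :=
    antitoneOn_mul_intervalIntegrable haδ (hψa.mono (Set.Icc_subset_Icc ha.le le_rfl))
      (fun x hx => hψ0 x ⟨ha.le.trans hx.1, hx.2⟩) hGint
  obtain ⟨K, hK⟩ : ∃ K : ℕ, δ / 2^K < a := by
    obtain ⟨K, hK⟩ := pow_unbounded_of_one_lt (δ/a) (one_lt_two (α := ℝ))
    exact ⟨K, by rw [div_lt_iff₀ (by positivity)] at hK ⊢; nlinarith⟩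
  set x : ℕ → ℝ := fun k => max a (δ / 2^k) with hx
  have hxmem : ∀ k, a ≤ x k ∧ x k ≤ δ := by
    intro k
    exact ⟨le_max_left _ _, max_le haδ (hdivδ k)⟩
  have hxanti : ∀ k, x (k+1) ≤ x k := by
    intro k
    exact max_le (le_max_left _ _) (le_trans (hdiv (by omega)) (le_max_right _ _))
  have hx0 : x 0 = δ := by simp [hx, haδ]
  have hxK : x (K+1) = a := by
    rw [hx]
    simp only [max_eq_left_iff]
    exact le_trans (hdiv (by omega)) hK.le
  have hsum : (∫ t in a..δ, ψ t * G t) =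
      ∑ k ∈ Finset.range (K+1), ∫ t in x (k+1)..x k, ψ t * G t := by
    have hadj := intervalIntegral.sum_integral_adjacent_intervals (a := x) (n := K+1)
      (fun k _ => ((hψG (x (k+1)) (x k) (hxmem _).1 (hxanti k) (hxmem _).2).symm))
    rw [hx0, hxK] at hadj
    calc (∫ t in a..δ, ψ t * G t) = -∫ t in δ..a, ψ t * G t := by
          rw [intervalIntegral.integral_symm]
      _ = -∑ k ∈ Finset.range (K+1), ∫ t in x k..x (k+1), ψ t * G t := by rw [hadj]
      _ = ∑ k ∈ Finset.range (K+1), ∫ t in x (k+1)..x k, ψ t * G t := by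
          rw [← Finset.sum_neg_distrib]
          exact Finset.sum_congr rfl (fun k _ => (intervalIntegral.integral_symm _ _).symm)
  have hshell : ∀ k ∈ Finset.range (K+1),
      (∫ t in x (k+1)..x k, ψ t * G t) ≤ 16*ε' * ∫ t in δ/2^(k+2)..δ/2^(k+1), ψ t := by
    intro k _
    have hd2 : (0:ℝ) < δ/2^(k+1) := by positivity
    have hdle : δ/2^(k+2) ≤ δ/2^(k+1) := hdiv (by omega)
    have hd1δ : δ/2^(k+1) ≤ δ := hdivδ (k+1)
    have hIk0 : 0 ≤ ∫ t in δ/2^(k+2)..δ/2^(k+1), ψ t :=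
      intervalIntegral.integral_nonneg hdle
        (fun t ht => hψ0 t ⟨le_trans (by positivity) ht.1, ht.2.trans hd1δ⟩)
    by_cases hc : δ / 2^k ≤ a
    · have h1 : x k = a := max_eq_left hc
      have h2 : x (k+1) = a := max_eq_left (le_trans (hdiv (by omega)) hc)
      rw [h1, h2, intervalIntegral.integral_same]
      positivity
    · push_neg at hc
      have hxk : x k = δ/2^k := max_eq_right hc.le
      have hψd0 : 0 ≤ ψ (δ/2^(k+1)) := hψ0 _ ⟨by positivity, hd1δ⟩
      have s1 : (∫ t in x (k+1)..x k, ψ t * G t) ≤ ψ (x (k+1)) * ∫ t in x (k+1)..x k, G t := by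
        rw [← intervalIntegral.integral_const_mul]
        refine intervalIntegral.integral_mono_on (hxanti k)
          (hψG _ _ (hxmem _).1 (hxanti k) (hxmem _).2)
          ((hGint _ _).const_mul _) (fun t ht => ?_)
        have ht0 : 0 ≤ t := le_trans (ha.le.trans (hxmem (k+1)).1) ht.1
        exact mul_le_mul_of_nonneg_right
          (hψa ⟨le_trans ha.le (hxmem _).1, (hxmem _).2⟩ ⟨ht0, ht.2.trans (hxmem k).2⟩ ht.1)
          (hG0 t)
      have s2 : (∫ t in x (k+1)..x k, G t) ≤ 4*ε'*(x k) := by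
        have hsplit := intervalIntegral.integral_add_adjacent_intervals
          (hGint a (x (k+1))) (hGint (x (k+1)) (x k))
        have hpos : 0 ≤ ∫ t in a..x (k+1), G t :=
          intervalIntegral.integral_nonneg (hxmem _).1 (fun t _ => hG0 t)
        have := hH (x k) ⟨(hxmem k).1, (hxmem k).2⟩
        linarith [hsplit, this]
      have s3 : ψ (x (k+1)) ≤ ψ (δ/2^(k+1)) :=
        hψa ⟨by positivity, hd1δ⟩ ⟨ha.le.trans (hxmem _).1, (hxmem _).2⟩ (le_max_right _ _)
      have s4 : ψ (δ/2^(k+1)) * (δ/2^(k+2)) ≤ ∫ t in δ/2^(k+2)..δ/2^(k+1), ψ t := by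
        have hconst : (∫ t in δ/2^(k+2)..δ/2^(k+1), ψ (δ/2^(k+1))) =
            (δ/2^(k+1) - δ/2^(k+2)) * ψ (δ/2^(k+1)) := by
          simp [intervalIntegral.integral_const, smul_eq_mul]
        have hmono : (∫ t in δ/2^(k+2)..δ/2^(k+1), ψ (δ/2^(k+1)))
            ≤ ∫ t in δ/2^(k+2)..δ/2^(k+1), ψ t := by
          refine intervalIntegral.integral_mono_on hdle (by simp)
            (hψint _ _ (by positivity) hdle hd1δ) (fun t ht => ?_)
          exact hψa ⟨le_trans (by positivity) ht.1, ht.2.trans hd1δ⟩ ⟨by positivity, hd1δ⟩ ht.2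
        have : δ/2^(k+1) - δ/2^(k+2) = δ/2^(k+2) := by ring
        nlinarith [hconst, hmono]
      have hψx0 : 0 ≤ ψ (x (k+1)) := hψ0 _ ⟨le_trans ha.le (hxmem _).1, (hxmem _).2⟩
      have hxkval : 4*ε'*(x k) = 16*ε'*(δ/2^(k+2)) := by rw [hxk]; ring
      have hGnn : 0 ≤ ∫ t in x (k+1)..x k, G t :=
        intervalIntegral.integral_nonneg (hxanti k) (fun t _ => hG0 t)
      calc (∫ t in x (k+1)..x k, ψ t * G t) ≤ ψ (x (k+1)) * ∫ t in x (k+1)..x k, G t := s1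
        _ ≤ ψ (δ/2^(k+1)) * (4*ε'*(x k)) := mul_le_mul s3 s2 hGnn hψd0
        _ = 16*ε' * (ψ (δ/2^(k+1)) * (δ/2^(k+2))) := by rw [hxkval]; ring
        _ ≤ 16*ε' * ∫ t in δ/2^(k+2)..δ/2^(k+1), ψ t :=
            mul_le_mul_of_nonneg_left s4 (by positivity)
  have htel : ∑ k ∈ Finset.range (K+1), (∫ t in δ/2^(k+2)..δ/2^(k+1), ψ t)
      ≤ ∫ t in (0:ℝ)..δ, ψ t := by
    set y : ℕ → ℝ := fun j => δ / 2^(K+2-j) with hy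
    have hymem : ∀ j, j ≤ K+1 → 0 ≤ y j ∧ y j ≤ δ := by
      intro j hj
      exact ⟨by positivity, hdivδ _⟩
    have hymono : ∀ j, j < K+1 → y j ≤ y (j+1) := by
      intro j hj
      exact hdiv (by omega)
    have hadj := intervalIntegral.sum_integral_adjacent_intervals (a := y) (n := K+1)
      (fun j hj => hψint (y j) (y (j+1)) (hymem j (by omega)).1 (hymono j hj) (hymem (j+1) (by omega)).2)
    have hrefl : ∑ k ∈ Finset.range (K+1), (∫ t in δ/2^(k+2)..δ/2^(k+1), ψ t)
        = ∑ j ∈ Finset.range (K+1), ∫ t in y j..y (j+1), ψ t := by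
      rw [← Finset.sum_range_reflect]
      refine Finset.sum_congr rfl (fun j hj => ?_)
      simp only [Finset.mem_range] at hj
      have e1 : K + 1 - 1 - j + 2 = K + 2 - j := by omega
      have e2 : K + 1 - 1 - j + 1 = K + 2 - (j+1) := by omega
      rw [hy]; simp only
      rw [e1, e2]
    rw [hrefl, hadj]
    have hy0 : y 0 = δ/2^(K+2) := by simp [hy]
    have hyK : y (K+1) = δ/2 := by
      have e : K+2-(K+1) = 1 := by omega
      simp [hy, e]
    rw [hy0, hyK]
    refine intervalIntegral.integral_mono_interval (by positivity)
      (by simpa using hdiv (show 1 ≤ K+2 by omega))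
      (by linarith) ?_ (hψint 0 δ le_rfl hδ0.le le_rfl)
    refine (ae_restrict_iff' measurableSet_Ioc).mpr (Filter.Eventually.of_forall (fun t ht => ?_))
    exact hψ0 t ⟨ht.1.le, ht.2⟩
  calc (∫ t in a..δ, ψ t * G t)
      = ∑ k ∈ Finset.range (K+1), ∫ t in x (k+1)..x k, ψ t * G t := hsum
    _ ≤ ∑ k ∈ Finset.range (K+1), 16*ε' * ∫ t in δ/2^(k+2)..δ/2^(k+1), ψ t :=
        Finset.sum_le_sum hshell
    _ = 16*ε' * ∑ k ∈ Finset.range (K+1), ∫ t in δ/2^(k+2)..δ/2^(k+1), ψ t := by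
        rw [Finset.mul_sum]
    _ ≤ 16*ε' * ∫ t in (0:ℝ)..δ, ψ t := mul_le_mul_of_nonneg_left htel (by positivity)
    _ ≤ 16*ε'*C₃ := mul_le_mul_of_nonneg_left hC₃ (by positivity)

set_option maxHeartbeats 1600000

/-- Theorem 2 for `dμ = f dt`: for a general approximation of identity
`{φ_r}` and `λ(r) ↘ 0` with `limsup λ(r)‖φ_r‖_∞ < ∞`, the convolutions
`Φ_r(θ, f) = ∫ φ_r(θ - t) f(t) dt` `λ(r)`-converge to `f(x₀)` at every Lebesgue
point `x₀` of `f ∈ L¹(𝕋)`. -/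
theorem fatou_general_kernels_L1
    (φ : ℝ → ℝ → ℝ) (lam : ℝ → ℝ)
    (hmeas : ∀ r ∈ Set.Ioo (0 : ℝ) 1, Measurable (φ r))
    (hper : ∀ r ∈ Set.Ioo (0 : ℝ) 1, ∀ t, φ r (t + 2 * π) = φ r t)
    (hbdd : ∀ r ∈ Set.Ioo (0 : ℝ) 1, ∃ M, ∀ t, |φ r t| ≤ M)
    (hAI1 : Tendsto (fun r => ∫ t in (-π)..π, φ r t) (𝓝[<] (1 : ℝ)) (𝓝 1))
    (hAI2 : ∀ x ∈ Set.Ioo (0 : ℝ) π,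
      Tendsto (fun r => symMaj04 (φ r) x) (𝓝[<] (1 : ℝ)) (𝓝 0))
    (hAI3 : ∃ C, ∀ r ∈ Set.Ioo (0 : ℝ) 1, (∫ x in (-π)..π, symMaj04 (φ r) x) ≤ C)
    (hlampos : ∀ r ∈ Set.Ioo (0 : ℝ) 1, 0 < lam r)
    (hlamdec : AntitoneOn lam (Set.Ioo (0 : ℝ) 1))
    (hlam0 : Tendsto lam (𝓝[<] (1 : ℝ)) (𝓝 0))
    (hbound : ∃ C, ∀ᶠ r in 𝓝[<] (1 : ℝ), lam r * supNorm04 (φ r) ≤ C)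
    (f : ℝ → ℝ)
    (hfper : ∀ t, f (t + 2 * π) = f t)
    (hfint : IntervalIntegrable f volume (-π) π)
    (x₀ : ℝ)
    (hLeb : Tendsto (fun h : ℝ => (1 / (2 * h)) * ∫ t in (-h)..h, |f (x₀ + t) - f x₀|)
      (𝓝[>] (0 : ℝ)) (𝓝 0)) :
    ∀ ε > 0, ∀ᶠ r in 𝓝[<] (1 : ℝ), ∀ θ, |θ - x₀| ≤ lam r →
      |(∫ t in (-π)..π, φ r (θ - t) * f t) - f x₀| < ε := by
  intro ε hε
  obtain ⟨C₀, hC₀⟩ := hbound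
  obtain ⟨C₃₀, hC₃₀⟩ := hAI3
  set g : ℝ → ℝ := fun t => f (x₀ + t) - f x₀ with hgdef
  have hfall : ∀ a b : ℝ, IntervalIntegrable f volume a b :=
    periodic_intervalIntegrable hfper hfint
  have hgall : ∀ a b : ℝ, IntervalIntegrable g volume a b := by
    intro a b
    have h1 : IntervalIntegrable (fun t => f (x₀ + t)) volume a b :=
      II_ends ((hfall (a + x₀) (b + x₀)).comp_add_left x₀) (by ring) (by ring)
    exact h1.sub intervalIntegrable_const
  have hgabs : ∀ a b : ℝ, IntervalIntegrable (fun t => |g t|) volume a b :=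
    fun a b => (hgall a b).abs
  have hgper : ∀ t, g (t + 2*π) = g t := by
    intro t
    simp only [hgdef]
    rw [show x₀ + (t + 2*π) = (x₀ + t) + 2*π by ring, hfper]
  have habs_per : Function.Periodic (fun s => |g s|) (2*π) := fun s => by simp only; rw [hgper s]
  set K := ∫ t in (-π)..π, |g t| with hKdef
  have hπ0 := Real.pi_pos
  have hK0 : 0 ≤ K :=
    intervalIntegral.integral_nonneg (by linarith) (fun t _ => abs_nonneg _)
  set C := max C₀ 0 with hCdef
  set C₃ := max C₃₀ 0 with hC₃def
  have hC0 : 0 ≤ C := le_max_right _ _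
  have hC₃0 : 0 ≤ C₃ := le_max_right _ _
  set D := 6*C + 32*C₃ + 2*K + 1 with hDdef
  have hD0 : 0 < D := by simp only [hDdef]; linarith
  set ε' := ε / (2*D) with hε'def
  have hε'0 : 0 < ε' := by positivity
  -- Lebesgue point: small scale δ
  have hLeb2 : Tendsto (fun h : ℝ => (1/(2*h)) * ∫ t in (-h)..h, |g t|)
      (𝓝[>] (0:ℝ)) (𝓝 0) := hLeb
  have hev : ∀ᶠ h in 𝓝[>] (0:ℝ), (1/(2*h)) * (∫ t in (-h)..h, |g t|) < ε' :=
    hLeb2.eventually_lt_const hε'0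
  rw [eventually_nhdsWithin_iff, Metric.eventually_nhds_iff] at hev
  obtain ⟨δ₁, hδ₁0, hδ₁⟩ := hev
  set δ := min (δ₁/4) (π/2) with hδdef
  have hδ0 : 0 < δ := lt_min (by linarith) (by linarith)
  have hδπ : δ < π := lt_of_le_of_lt (min_le_right _ _) (by linarith)
  have hδδ₁ : 2*δ ≤ δ₁/2 := by
    have := min_le_left (δ₁/4) (π/2)
    simp only [hδdef] at *
    linarith
  have hF : ∀ h : ℝ, 0 < h → h ≤ 2*δ → (∫ t in (-h)..h, |g t|) ≤ 2*ε'*h := by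
    intro h hh0 hh
    have hlt : dist h 0 < δ₁ := by
      rw [Real.dist_eq, sub_zero, abs_of_pos hh0]; linarith
    have hstrict := hδ₁ hlt (mem_Ioi.mpr hh0)
    have h2 : (0:ℝ) < 2*h := by linarith
    have hmul := mul_le_mul_of_nonneg_left hstrict.le h2.le
    have heq : (2*h) * ((1/(2*h)) * ∫ t in (-h)..h, |g t|) = ∫ t in (-h)..h, |g t| := by
      field_simp
    rw [heq] at hmul
    linarith
  -- eventual conditions on r
  have hevψ : ∀ᶠ r in 𝓝[<] (1:ℝ), symMaj04 (φ r) δ < ε' :=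
    (hAI2 δ ⟨hδ0, hδπ⟩).eventually_lt_const hε'0
  have hevlam : ∀ᶠ r in 𝓝[<] (1:ℝ), lam r < δ/2 :=
    hlam0.eventually_lt_const (by positivity)
  have hevmem : ∀ᶠ r in 𝓝[<] (1:ℝ), r ∈ Set.Ioo (0:ℝ) 1 := by
    have h1 : ∀ᶠ r in 𝓝[<] (1:ℝ), r ∈ Iio (1:ℝ) := eventually_mem_nhdsWithin
    have h2 : ∀ᶠ r in 𝓝[<] (1:ℝ), (0:ℝ) < r :=
      (eventually_gt_nhds one_pos).filter_mono nhdsWithin_le_nhds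
    filter_upwards [h1, h2] with r hr1 hr2
    exact ⟨hr2, hr1⟩
  have hevη : ∀ᶠ r in 𝓝[<] (1:ℝ),
      |(∫ t in (-π)..π, φ r t) - 1| < ε/(2*(|f x₀|+1)) := by
    have hη : 0 < ε/(2*(|f x₀|+1)) := by positivity
    have := Metric.tendsto_nhds.mp hAI1 _ hη
    simpa [Real.dist_eq] using this
  filter_upwards [hC₀, hevψ, hevlam, hevmem, hevη] with r hrC hrψ hrlam hrmem hrη
  intro θ hθ
  obtain ⟨M, hM⟩ := hbdd r hrmem
  have hφm := hmeas r hrmem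
  have hφper : Function.Periodic (φ r) (2*π) := hper r hrmem
  have hlamr0 : 0 < lam r := hlampos r hrmem
  set u := θ - x₀ with hudef
  have hulam : |u| ≤ lam r := hθ
  have hul : -lam r ≤ u ∧ u ≤ lam r := abs_le.mp hulam
  set a := 2 * lam r with hadef
  have ha0 : 0 < a := by simp only [hadef]; linarith
  have haδ : a < δ := by simp only [hadef]; linarith
  set ψ := symMaj04 (φ r) with hψdef
  set N := supNorm04 (φ r) with hNdef
  have hN0 : 0 ≤ N := ENNReal.toReal_nonneg
  have hlamN : lam r * N ≤ C := le_trans hrC (le_max_left _ _)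
  have hψanti : AntitoneOn ψ (Icc 0 π) := symMaj04_antitoneOn hM
  have hψantiδ : AntitoneOn ψ (Icc 0 δ) := hψanti.mono (Icc_subset_Icc le_rfl hδπ.le)
  have hψnn : ∀ x ∈ Icc (0:ℝ) π, 0 ≤ ψ x := fun x hx =>
    symMaj04_nonneg hM (by rw [abs_of_nonneg hx.1]; exact hx.2)
  have hψnnδ : ∀ x ∈ Icc (0:ℝ) δ, 0 ≤ ψ x := fun x hx =>
    hψnn x ⟨hx.1, hx.2.trans hδπ.le⟩
  have hψδ : ψ δ ≤ ε' := hrψ.le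
  -- ∫_0^δ ψ ≤ C₃
  have hψIC : (∫ x in (0:ℝ)..δ, ψ x) ≤ C₃ := by
    have hint1 : IntervalIntegrable ψ volume (-π) 0 := by
      refine (MonotoneOn.intervalIntegrable ?_)
      intro x hx y hy hxy
      rw [Set.uIcc_of_le (by linarith : (-π:ℝ) ≤ 0)] at hx hy
      refine symMaj04_anti hM ?_ ?_
      · rw [abs_of_nonpos hx.2, abs_of_nonpos hy.2]; linarith
      · rw [abs_of_nonpos hx.2]; linarith [hx.1]
    have hint2 : IntervalIntegrable ψ volume 0 δ :=
      (hψantiδ.mono (by rw [Set.uIcc_of_le hδ0.le])).intervalIntegrable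
    have hint3 : IntervalIntegrable ψ volume δ π :=
      ((hψanti.mono (by rw [Set.uIcc_of_le hδπ.le]; exact Set.Icc_subset_Icc hδ0.le le_rfl)).intervalIntegrable)
    have e1 := intervalIntegral.integral_add_adjacent_intervals hint2 hint3
    have e2 := intervalIntegral.integral_add_adjacent_intervals hint1 (hint2.trans hint3)
    have p1 : 0 ≤ ∫ x in (-π)..(0:ℝ), ψ x :=
      intervalIntegral.integral_nonneg (by linarith) (fun x hx =>
        symMaj04_nonneg hM (abs_le.mpr ⟨by linarith [hx.1], by linarith [hx.2]⟩))
    have p3 : 0 ≤ ∫ x in δ..π, ψ x :=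
      intervalIntegral.integral_nonneg hδπ.le (fun x hx =>
        hψnn x ⟨hδ0.le.trans hx.1, hx.2⟩)
    have hC := hC₃₀ r hrmem
    have hle : C₃₀ ≤ C₃ := le_max_left _ _
    linarith
  -- a.e. bound by the essential sup
  have hNae : ∀ᵐ t ∂(volume.restrict (Set.Ioc (-π) π)), |φ r t| ≤ N := by
    have h1 : ∀ᵐ t ∂(volume.restrict (Set.Ioc (-π) π)),
        (‖φ r t‖₊ : ℝ≥0∞) ≤ eLpNormEssSup (φ r) (volume.restrict (Set.Ioc (-π) π)) :=
      ae_le_eLpNormEssSup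
    have h2 : eLpNormEssSup (φ r) (volume.restrict (Set.Ioc (-π) π)) ≠ ⊤ :=
      (eLpNormEssSup_lt_top_of_ae_bound (C := M)
        (Filter.Eventually.of_forall (fun t => by simpa using hM t))).ne
    refine h1.mono (fun t ht => ?_)
    have h3 := ENNReal.toReal_mono h2 ht
    rw [hNdef, supNorm04, eLpNorm_exponent_top]
    simpa [Real.norm_eq_abs] using h3
  -- the integrand pieces
  set B : ℝ → ℝ := fun t => φ r t * g (u - t) with hBdef
  have hgcomp : ∀ p q : ℝ, IntervalIntegrable (fun t => g (u - t)) volume p q := fun p q =>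
    II_ends ((hgall (u - p) (u - q)).comp_sub_left u) (by ring) (by ring)
  have hGm : ∀ p q : ℝ, IntervalIntegrable (fun t => |g (u - t)|) volume p q := fun p q =>
    II_ends ((hgabs (u - p) (u - q)).comp_sub_left u) (by ring) (by ring)
  have hGp : ∀ p q : ℝ, IntervalIntegrable (fun t => |g (u + t)|) volume p q := fun p q =>
    II_ends ((hgabs (u + p) (u + q)).comp_add_left u) (by ring) (by ring)
  have hBint : IntervalIntegrable B volume (-π) π :=
    bdd_mul_intervalIntegrable hφm hM (hgcomp (-π) π)
  -- key identity
  have keyId : (∫ t in (-π)..π, φ r (θ - t) * f t)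
      = (∫ t in (-π)..π, φ r t) * f x₀ + ∫ t in (-π)..π, B t := by
    have hWper : Function.Periodic (fun t => φ r (θ - t) * f t) (2*π) := by
      intro t
      simp only
      rw [hfper]
      rw [show θ - t = (θ - (t + 2*π)) + 2*π by ring, hφper]
    have E1a : (∫ t in (-π)..π, φ r (θ - t) * f t)
        = ∫ t in (θ - π)..(θ + π), φ r (θ - t) * f t := by
      have h := hWper.intervalIntegral_add_eq (θ - π) (-π)
      rw [show θ - π + 2*π = θ + π by ring, show -π + 2*π = π by ring] at h
      exact h.symm
    have E1b : (∫ t in (θ - π)..(θ + π), φ r (θ - t) * f t)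
        = ∫ x in (-π)..π, φ r x * f (θ - x) := by
      have h := intervalIntegral.integral_comp_sub_left
        (a := θ - π) (b := θ + π) (fun s => φ r s * f (θ - s)) θ
      simp only [sub_sub_cancel] at h
      rw [show θ - (θ + π) = -π by ring] at h
      exact h
    have hpt : ∀ x ∈ Set.uIcc (-π) π, φ r x * f (θ - x) = φ r x * f x₀ + B x := by
      intro x _
      simp only [hBdef, hgdef]
      rw [show x₀ + (u - x) = θ - x by rw [hudef]; ring]
      ring
    have E2 : (∫ x in (-π)..π, φ r x * f (θ - x))
        = (∫ t in (-π)..π, φ r t) * f x₀ + ∫ t in (-π)..π, B t := by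
      rw [intervalIntegral.integral_congr hpt]
      rw [intervalIntegral.integral_add
        (bdd_mul_intervalIntegrable hφm hM intervalIntegrable_const) hBint]
      rw [intervalIntegral.integral_mul_const]
    rw [E1a, E1b, E2]
  -- translation identity for ∫ |g(u - t)|
  have hKu : (∫ t in (-π)..π, |g (u - t)|) = K := by
    have h1 := intervalIntegral.integral_comp_sub_left
      (a := -π) (b := π) (fun s => |g s|) u
    rw [show u - π = u - π by ring, show u - -π = u + π by ring] at h1
    have h2 := habs_per.intervalIntegral_add_eq (u - π) (-π)
    rw [show u - π + 2*π = u + π by ring, show -π + 2*π = π by ring] at h2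
    rw [h1, h2, hKdef]
  -- decompose ∫ B into five pieces
  have hBsub : ∀ p q : ℝ, -π ≤ p → p ≤ q → q ≤ π → IntervalIntegrable B volume p q := by
    intro p q h1 h2 h3
    refine hBint.mono_set ?_
    rw [Set.uIcc_of_le h2, Set.uIcc_of_le (by linarith : (-π:ℝ) ≤ π)]
    exact Set.Icc_subset_Icc h1 h3
  have hends : (-π:ℝ) ≤ -δ ∧ (-δ:ℝ) ≤ -a ∧ (-a:ℝ) ≤ a ∧ a ≤ δ ∧ δ ≤ π := by
    refine ⟨by linarith, by linarith, by linarith, haδ.le, hδπ.le⟩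
  obtain ⟨he1, he2, he3, he4, he5⟩ := hends
  have h5split : (∫ t in (-π)..π, B t)
      = (∫ t in (-π)..(-δ), B t) + (∫ t in (-δ)..(-a), B t) + (∫ t in (-a)..a, B t)
        + (∫ t in a..δ, B t) + (∫ t in δ..π, B t) := by
    have e1 := intervalIntegral.integral_add_adjacent_intervals
      (hBsub (-π) (-δ) le_rfl he1 (by linarith)) (hBsub (-δ) π he1 (by linarith) le_rfl)
    have e2 := intervalIntegral.integral_add_adjacent_intervals
      (hBsub (-δ) (-a) he1 he2 (by linarith)) (hBsub (-a) π (by linarith) (by linarith) le_rfl)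
    have e3 := intervalIntegral.integral_add_adjacent_intervals
      (hBsub (-a) a (by linarith) he3 (by linarith)) (hBsub a π (by linarith) (by linarith) le_rfl)
    have e4 := intervalIntegral.integral_add_adjacent_intervals
      (hBsub a δ (by linarith) he4 (by linarith)) (hBsub δ π (by linarith) he5 le_rfl)
    linarith
  -- abs of integrals bounded by integrals of |φ| * |g(u-·)|
  have habsB : ∀ p q : ℝ, p ≤ q → -π ≤ p → q ≤ π →
      |∫ t in p..q, B t| ≤ ∫ t in p..q, |φ r t| * |g (u - t)| := by
    intro p q hpq h1 h2
    refine (intervalIntegral.abs_integral_le_integral_abs hpq).trans_eq ?_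
    refine intervalIntegral.integral_congr (fun t _ => ?_)
    simp only [hBdef, abs_mul]
  -- integrability of |φ|*|g(u-·)|
  have hAint : ∀ p q : ℝ, IntervalIntegrable (fun t => |φ r t| * |g (u - t)|) volume p q :=
    fun p q => bdd_mul_intervalIntegrable hφm.abs (M := M)
      (fun t => by rw [abs_abs]; exact hM t) (hGm p q)
  have hint_nonneg : ∀ p q : ℝ, p ≤ q → 0 ≤ ∫ t in p..q, |g (u - t)| :=
    fun p q h => intervalIntegral.integral_nonneg h (fun t _ => abs_nonneg _)
  have hIK : ∀ p q : ℝ, -π ≤ p → p ≤ q → q ≤ π → (∫ t in p..q, |g (u - t)|) ≤ K := by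
    intro p q h1 h2 h3
    rw [← hKu]
    exact intervalIntegral.integral_mono_interval h1 h2 h3
      (Filter.Eventually.of_forall (fun t => abs_nonneg _)) (hGm (-π) π)
  -- Piece 1 : [-π, -δ]
  have hP1 : (∫ t in (-π)..(-δ), |φ r t| * |g (u - t)|) ≤ ε' * K := by
    have step1 : (∫ t in (-π)..(-δ), |φ r t| * |g (u - t)|)
        ≤ ∫ t in (-π)..(-δ), ψ δ * |g (u - t)| := by
      refine intervalIntegral.integral_mono_on (by linarith) (hAint _ _)
        ((hGm (-π) (-δ)).const_mul _) (fun t ht => ?_)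
      refine mul_le_mul_of_nonneg_right ?_ (abs_nonneg _)
      refine le_symMaj04 hM ?_ ?_
      · rw [abs_of_nonneg hδ0.le, abs_of_nonpos (by linarith [ht.2] : t ≤ 0)]
        linarith [ht.2]
      · rw [abs_of_nonpos (by linarith [ht.2] : t ≤ 0)]; linarith [ht.1]
    rw [intervalIntegral.integral_const_mul] at step1
    refine step1.trans ?_
    exact mul_le_mul hψδ (hIK _ _ le_rfl (by linarith) (by linarith))
      (hint_nonneg _ _ (by linarith)) hε'0.le
  -- Piece 5 : [δ, π]
  have hP5 : (∫ t in δ..π, |φ r t| * |g (u - t)|) ≤ ε' * K := by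
    have step1 : (∫ t in δ..π, |φ r t| * |g (u - t)|)
        ≤ ∫ t in δ..π, ψ δ * |g (u - t)| := by
      refine intervalIntegral.integral_mono_on he5 (hAint _ _)
        ((hGm δ π).const_mul _) (fun t ht => ?_)
      refine mul_le_mul_of_nonneg_right ?_ (abs_nonneg _)
      refine le_symMaj04 hM ?_ ?_
      · rw [abs_of_nonneg hδ0.le, abs_of_nonneg (hδ0.le.trans ht.1)]
        exact ht.1
      · rw [abs_of_nonneg (hδ0.le.trans ht.1)]; exact ht.2
    rw [intervalIntegral.integral_const_mul] at step1
    refine step1.trans ?_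
    exact mul_le_mul hψδ (hIK _ _ (by linarith) he5 le_rfl)
      (hint_nonneg _ _ he5) hε'0.le
  -- Piece 3 : [-a, a]
  have hP3 : (∫ t in (-a)..a, |φ r t| * |g (u - t)|) ≤ 6*ε'*C := by
    have hsub : Set.Icc (-a) a ⊆ Set.Ioc (-π) π :=
      fun x hx => ⟨by linarith [hx.1], by linarith [hx.2]⟩
    have hae : ∀ᵐ t ∂(volume.restrict (Set.Icc (-a) a)),
        |φ r t| * |g (u - t)| ≤ N * |g (u - t)| := by
      have h1 : ∀ᵐ t ∂(volume.restrict (Set.Icc (-a) a)), |φ r t| ≤ N :=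
        hNae.filter_mono (ae_mono (Measure.restrict_mono hsub le_rfl))
      exact h1.mono (fun t ht => mul_le_mul_of_nonneg_right ht (abs_nonneg _))
    have step1 : (∫ t in (-a)..a, |φ r t| * |g (u - t)|) ≤ ∫ t in (-a)..a, N * |g (u - t)| :=
      intervalIntegral.integral_mono_ae_restrict (by linarith) (hAint _ _)
        ((hGm _ _).const_mul _) hae
    rw [intervalIntegral.integral_const_mul] at step1
    have step2 : (∫ t in (-a)..a, |g (u - t)|) ≤ 2*ε'*(3*lam r) := by
      have h1 := intervalIntegral.integral_comp_sub_left
        (a := -a) (b := a) (fun s => |g s|) u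
      rw [show u - -a = u + a by ring] at h1
      rw [h1]
      have hmono : (∫ x in (u-a)..(u+a), |g x|) ≤ ∫ x in (-(3*lam r))..(3*lam r), |g x| := by
        refine intervalIntegral.integral_mono_interval ?_ ?_ ?_
          (Filter.Eventually.of_forall (fun t => abs_nonneg _)) (hgabs _ _)
        · simp only [hadef]; linarith [hul.1]
        · simp only [hadef]; linarith
        · simp only [hadef]; linarith [hul.2]
      refine hmono.trans ?_
      exact hF (3*lam r) (by linarith) (by linarith)
    calc (∫ t in (-a)..a, |φ r t| * |g (u - t)|) ≤ N * ∫ t in (-a)..a, |g (u - t)| := step1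
      _ ≤ N * (2*ε'*(3*lam r)) := mul_le_mul_of_nonneg_left step2 hN0
      _ = 6*ε'*(lam r * N) := by ring
      _ ≤ 6*ε'*C := mul_le_mul_of_nonneg_left hlamN (by positivity)
  -- Piece 4 : [a, δ]
  have hψantiA : AntitoneOn ψ (Icc a δ) :=
    hψanti.mono (Set.Icc_subset_Icc ha0.le hδπ.le)
  have hψnnA : ∀ x ∈ Icc a δ, 0 ≤ ψ x :=
    fun x hx => hψnnδ x ⟨ha0.le.trans hx.1, hx.2⟩
  have hP4 : (∫ t in a..δ, |φ r t| * |g (u - t)|) ≤ 16*ε'*C₃ := by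
    have step1 : (∫ t in a..δ, |φ r t| * |g (u - t)|)
        ≤ ∫ t in a..δ, ψ t * |g (u - t)| := by
      refine intervalIntegral.integral_mono_on he4 (hAint _ _)
        (antitoneOn_mul_intervalIntegrable he4 hψantiA hψnnA (hGm) a δ le_rfl he4 le_rfl)
        (fun t ht => ?_)
      refine mul_le_mul_of_nonneg_right (le_symMaj04 hM le_rfl ?_) (abs_nonneg _)
      rw [abs_of_nonneg (ha0.le.trans ht.1)]
      linarith [ht.2]
    refine step1.trans ?_
    refine dyadic_bound ha0 he4 hψantiδ hψnnδ (fun t => abs_nonneg _) hGm hε'0.le ?_ hψIC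
    intro b hb
    have h1 := intervalIntegral.integral_comp_sub_left
      (a := a) (b := b) (fun s => |g s|) u
    rw [h1]
    have hmono : (∫ x in (u-b)..(u-a), |g x|) ≤ ∫ x in (-(b+lam r))..(b+lam r), |g x| := by
      refine intervalIntegral.integral_mono_interval ?_ ?_ ?_
        (Filter.Eventually.of_forall (fun t => abs_nonneg _)) (hgabs _ _)
      · linarith [hul.1]
      · linarith [hb.1, hb.2]
      · simp only [hadef] at hb ⊢; linarith [hul.2, hb.1]
    have hFb := hF (b + lam r) (by linarith [hb.1]) (by linarith [hb.2])
    have hblam : lam r ≤ b/2 := by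
      simp only [hadef] at hb; linarith [hb.1]
    have hb0 : 0 < b := ha0.trans_le hb.1
    have hq : 2*ε'*(b+lam r) ≤ 4*ε'*b := by
      have h2b : b + lam r ≤ 2*b := by linarith
      calc 2*ε'*(b+lam r) ≤ 2*ε'*(2*b) := by
            exact mul_le_mul_of_nonneg_left h2b (by positivity)
        _ = 4*ε'*b := by ring
    linarith [hmono, hFb]
  -- Piece 2 : [-δ, -a]
  have hP2 : (∫ t in (-δ)..(-a), |φ r t| * |g (u - t)|) ≤ 16*ε'*C₃ := by
    have hflip : (∫ t in (-δ)..(-a), |φ r t| * |g (u - t)|)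
        = ∫ t in a..δ, |φ r (-t)| * |g (u + t)| := by
      have h1 := intervalIntegral.integral_comp_neg
        (a := a) (b := δ) (fun t => |φ r t| * |g (u - t)|)
      rw [← h1]
      refine intervalIntegral.integral_congr (fun t _ => ?_)
      simp only [sub_neg_eq_add]
    rw [hflip]
    have hA2int : ∀ p q : ℝ, IntervalIntegrable (fun t => |φ r (-t)| * |g (u + t)|) volume p q :=
      fun p q => bdd_mul_intervalIntegrable ((hφm.comp measurable_neg).abs) (M := M)
        (fun t => by rw [abs_abs]; exact hM (-t)) (hGp p q)
    have step1 : (∫ t in a..δ, |φ r (-t)| * |g (u + t)|)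
        ≤ ∫ t in a..δ, ψ t * |g (u + t)| := by
      refine intervalIntegral.integral_mono_on he4 (hA2int _ _)
        (antitoneOn_mul_intervalIntegrable he4 hψantiA hψnnA (hGp) a δ le_rfl he4 le_rfl)
        (fun t ht => ?_)
      refine mul_le_mul_of_nonneg_right (le_symMaj04 hM ?_ ?_) (abs_nonneg _)
      · rw [abs_neg]
      · rw [abs_neg, abs_of_nonneg (ha0.le.trans ht.1)]
        linarith [ht.2]
    refine step1.trans ?_
    refine dyadic_bound ha0 he4 hψantiδ hψnnδ (fun t => abs_nonneg _) hGp hε'0.le ?_ hψIC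
    intro b hb
    have h1 := intervalIntegral.integral_comp_add_left
      (a := a) (b := b) (fun s => |g s|) u
    rw [h1]
    have hmono : (∫ x in (u+a)..(u+b), |g x|) ≤ ∫ x in (-(b+lam r))..(b+lam r), |g x| := by
      refine intervalIntegral.integral_mono_interval ?_ ?_ ?_
        (Filter.Eventually.of_forall (fun t => abs_nonneg _)) (hgabs _ _)
      · simp only [hadef]; linarith [hul.1, hb.1, ha0]
      · linarith [hb.1, hb.2]
      · linarith [hul.2]
    have hFb := hF (b + lam r) (by linarith [hb.1]) (by linarith [hb.2])
    have hblam : lam r ≤ b/2 := by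
      simp only [hadef] at hb; linarith [hb.1]
    have hb0 : 0 < b := ha0.trans_le hb.1
    have hq : 2*ε'*(b+lam r) ≤ 4*ε'*b := by
      have h2b : b + lam r ≤ 2*b := by linarith
      calc 2*ε'*(b+lam r) ≤ 2*ε'*(2*b) := by
            exact mul_le_mul_of_nonneg_left h2b (by positivity)
        _ = 4*ε'*b := by ring
    linarith [hmono, hFb]
  -- assemble
  have hmid : |∫ t in (-π)..π, B t| ≤ ε'*K + 16*ε'*C₃ + 6*ε'*C + 16*ε'*C₃ + ε'*K := by
    rw [h5split]
    have b1 := (habsB (-π) (-δ) (by linarith) le_rfl (by linarith)).trans hP1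
    have b2 := (habsB (-δ) (-a) he2 (by linarith) (by linarith)).trans hP2
    have b3 := (habsB (-a) a he3 (by linarith) (by linarith)).trans hP3
    have b4 := (habsB a δ he4 (by linarith) (by linarith)).trans hP4
    have b5 := (habsB δ π he5 (by linarith) le_rfl).trans hP5
    calc |(∫ t in (-π)..(-δ), B t) + (∫ t in (-δ)..(-a), B t) + (∫ t in (-a)..a, B t)
          + (∫ t in a..δ, B t) + (∫ t in δ..π, B t)|
        ≤ |(∫ t in (-π)..(-δ), B t) + (∫ t in (-δ)..(-a), B t) + (∫ t in (-a)..a, B t)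
          + (∫ t in a..δ, B t)| + |∫ t in δ..π, B t| := abs_add_le _ _
      _ ≤ (|(∫ t in (-π)..(-δ), B t) + (∫ t in (-δ)..(-a), B t) + (∫ t in (-a)..a, B t)|
          + |∫ t in a..δ, B t|) + |∫ t in δ..π, B t| := by
            gcongr; exact abs_add_le _ _
      _ ≤ ((|(∫ t in (-π)..(-δ), B t) + (∫ t in (-δ)..(-a), B t)| + |∫ t in (-a)..a, B t|)
          + |∫ t in a..δ, B t|) + |∫ t in δ..π, B t| := by
            gcongr; exact abs_add_le _ _
      _ ≤ (((|∫ t in (-π)..(-δ), B t| + |∫ t in (-δ)..(-a), B t|) + |∫ t in (-a)..a, B t|)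
          + |∫ t in a..δ, B t|) + |∫ t in δ..π, B t| := by
            gcongr; exact abs_add_le _ _
      _ ≤ ε'*K + 16*ε'*C₃ + 6*ε'*C + 16*ε'*C₃ + ε'*K := by
            linarith [b1, b2, b3, b4, b5]
  have hfinal : |(∫ t in (-π)..π, φ r (θ - t) * f t) - f x₀|
      ≤ |f x₀| * |(∫ t in (-π)..π, φ r t) - 1| + |∫ t in (-π)..π, B t| := by
    rw [keyId]
    have e : (∫ t in (-π)..π, φ r t) * f x₀ + (∫ t in (-π)..π, B t) - f x₀
        = f x₀ * ((∫ t in (-π)..π, φ r t) - 1) + ∫ t in (-π)..π, B t := by ring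
    rw [e]
    exact (abs_add_le _ _).trans (by rw [abs_mul])
  have hb1 : |f x₀| * |(∫ t in (-π)..π, φ r t) - 1| < ε/2 := by
    have hd : 0 < |f x₀| + 1 := by positivity
    have h2 : |f x₀| * |(∫ t in (-π)..π, φ r t) - 1| ≤ |f x₀| * (ε/(2*(|f x₀|+1))) :=
      mul_le_mul_of_nonneg_left hrη.le (abs_nonneg _)
    have h3 : |f x₀| * (ε/(2*(|f x₀|+1))) < ε/2 := by
      have h4 : |f x₀| * (ε/(2*(|f x₀|+1))) = (ε/2) * (|f x₀|/(|f x₀|+1)) := by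
        field_simp
      have h5 : |f x₀|/(|f x₀|+1) < 1 := by
        rw [div_lt_one hd]; linarith
      calc |f x₀| * (ε/(2*(|f x₀|+1))) = (ε/2) * (|f x₀|/(|f x₀|+1)) := h4
        _ < (ε/2) * 1 := mul_lt_mul_of_pos_left h5 (by linarith)
        _ = ε/2 := mul_one _
    linarith
  have hb2 : ε'*K + 16*ε'*C₃ + 6*ε'*C + 16*ε'*C₃ + ε'*K ≤ ε/2 := by
    have heq : ε' * D = ε/2 := by
      rw [hε'def]; field_simp
    have he : ε'*K + 16*ε'*C₃ + 6*ε'*C + 16*ε'*C₃ + ε'*K = ε'*D - ε' := by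
      rw [hDdef]; ring
    linarith
  linarith [hfinal, hmid, hb1, hb2]
end Helpers
end

section
/- Let {φ_r}_{0<r<1} be an approximation of identity on 𝕋 with φ_r ≥ 0, and let λ(r) ↘ 0 satisfy limsup_{r→1} λ(r)·‖φ_r‖_∞ = ∞. Then there exists a nonnegative function f ∈ L^1(𝕋) such that for every x ∈ 𝕋, limsup_{r→1} sup_{|θ-x|≤λ(r)} ∫_𝕋 φ_r(θ-t) f(t) dt = ∞. -/
/-!
If `λ(r) ‖φ_r‖_∞ ≥ B`, then `φ_r` exceeds `h = B / (2λ(r))` on a set of positive measure, and the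
uniform bound on `∫ φ_r*` confines that set to `[-λ(r)/2, λ(r)/2]`. At a density point `p` of it,
`φ_r` has mass `≥ h w` on `[p - w, p + w]`. Bumps of height `a = n / (h w)` on `[g - w, g + w]`,
for `g` on the grid `2πℤ/N` of spacing `≈ λ(r)/2`, cost `a N w ≈ 2n / B` in `L¹(𝕋)`, so for
`B = Bₙ` growing geometrically the grids for `rₙ → 1` sum to an integrable `f`. Given `x`, the
grid point `g` nearest to `x` and `θ = g + p` satisfy `|θ - x| ≤ λ(rₙ)` and
`Φ_{rₙ}(θ, f) ≥ a ∫_{p-w}^{p+w} φ_{rₙ} ≥ n`.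
-/

open MeasureTheory Real Set Filter Topology

/-- The `L^∞` norm of a kernel on the circle `𝕋 = [-π, π)`. -/
noncomputable def supNorm05 (φ : ℝ → ℝ) : ℝ :=
  (eLpNorm φ ⊤ (volume.restrict (Set.Ioc (-π) π))).toReal

/-- The symmetric decreasing majorant `φ*(x) = sup_{|x| ≤ |t| ≤ π} |φ(t)|`. -/
noncomputable def symMaj05 (φ : ℝ → ℝ) (x : ℝ) : ℝ :=
  sSup {s : ℝ | ∃ t, |x| ≤ |t| ∧ |t| ≤ π ∧ s = |φ t|}

open scoped ENNReal

namespace SharpnessDivergence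

section SymmetricMajorant

variable {φ : ℝ → ℝ} {M : ℝ}

lemma bddAbove_symMaj05_set (hM : ∀ t, |φ t| ≤ M) (x : ℝ) :
    BddAbove {s : ℝ | ∃ t, |x| ≤ |t| ∧ |t| ≤ π ∧ s = |φ t|} := by
  refine ⟨M, ?_⟩
  rintro s ⟨t, -, -, rfl⟩
  exact hM t

lemma abs_le_symMaj05 (hM : ∀ t, |φ t| ≤ M) {x t : ℝ} (hxt : |x| ≤ |t|) (ht : |t| ≤ π) :
    |φ t| ≤ symMaj05 φ x :=
  le_csSup (bddAbove_symMaj05_set hM x) ⟨t, hxt, ht, rfl⟩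

lemma symMaj05_le_of_abs_le (hM : ∀ t, |φ t| ≤ M) {x y : ℝ} (hxy : |x| ≤ |y|) (hy : |y| ≤ π) :
    symMaj05 φ y ≤ symMaj05 φ x := by
  refine csSup_le_csSup (bddAbove_symMaj05_set hM x) ⟨_, y, le_rfl, hy, rfl⟩ ?_
  rintro s ⟨t, hyt, ht, rfl⟩
  exact ⟨t, hxy.trans hyt, ht, rfl⟩

lemma intervalIntegrable_symMaj05 (hM : ∀ t, |φ t| ≤ M) :
    IntervalIntegrable (symMaj05 φ) volume (-π) π := by
  have hmono : MonotoneOn (symMaj05 φ) (uIcc (-π) 0) := by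
    rw [uIcc_of_le (by linarith [pi_pos])]
    intro x hx y hy hxy
    refine symMaj05_le_of_abs_le hM ?_ (abs_le.2 ⟨hx.1, by linarith [hx.2, pi_pos]⟩)
    rw [abs_of_nonpos hx.2, abs_of_nonpos hy.2]
    linarith
  have hanti : AntitoneOn (symMaj05 φ) (uIcc 0 π) := by
    rw [uIcc_of_le pi_pos.le]
    intro x hx y hy hxy
    refine symMaj05_le_of_abs_le hM ?_ (abs_le.2 ⟨by linarith [hy.1, pi_pos], hy.2⟩)
    rwa [abs_of_nonneg hx.1, abs_of_nonneg hy.1]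
  exact hmono.intervalIntegrable.trans hanti.intervalIntegrable

/-- Localization: a value `h` of `φ` at `t` forces `φ* ≥ h` on all of `[-|t|, |t|]`. -/
lemma mul_le_integral_symMaj05 (hM : ∀ t, |φ t| ≤ M) {h t : ℝ} (ht : |t| ≤ π) (hφt : h ≤ φ t) :
    2 * |t| * h ≤ ∫ x in (-π)..π, symMaj05 φ x := by
  have hle : ∀ x ∈ Icc (-|t|) |t|, h ≤ symMaj05 φ x := fun x hx =>
    hφt.trans ((le_abs_self _).trans (abs_le_symMaj05 hM (abs_le.2 hx) ht))
  have hnonneg : ∀ x ∈ Ioc (-π) π, 0 ≤ symMaj05 φ x := fun x hx =>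
    (abs_nonneg _).trans (abs_le_symMaj05 hM le_rfl (abs_le.2 ⟨hx.1.le, hx.2⟩))
  have hint := intervalIntegrable_symMaj05 hM
  calc 2 * |t| * h = ∫ _ in (-|t|)..|t|, h := by
        rw [intervalIntegral.integral_const, smul_eq_mul]; ring
    _ ≤ ∫ x in (-|t|)..|t|, symMaj05 φ x :=
        intervalIntegral.integral_mono_on (by linarith [abs_nonneg t]) intervalIntegrable_const
          (hint.mono_set (by
            rw [uIcc_of_le (by linarith [abs_nonneg t]), uIcc_of_le (by linarith [pi_pos])]
            exact Icc_subset_Icc (neg_le_neg ht) ht)) hle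
    _ ≤ ∫ x in (-π)..π, symMaj05 φ x :=
        intervalIntegral.integral_mono_interval (by linarith) (by linarith [abs_nonneg t]) ht
          ((ae_restrict_iff' measurableSet_Ioc).2 (ae_of_all _ hnonneg)) hint

end SymmetricMajorant

lemma volume_pos_of_lt_supNorm05 {φ : ℝ → ℝ} {h : ℝ} (hh : 0 ≤ h) (hlt : h < supNorm05 φ) :
    0 < volume ({t | h < |φ t|} ∩ Ioc (-π) π) := by
  by_contra! hzero
  have hae : ∀ᵐ t ∂volume.restrict (Ioc (-π) π), ‖φ t‖ ≤ h := by
    rw [ae_restrict_iff' measurableSet_Ioc, ae_iff]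
    refine measure_mono_null (fun t ht => ?_) (nonpos_iff_eq_zero.1 hzero)
    simp only [mem_ofPred_eq, not_forall, not_le, Real.norm_eq_abs] at ht
    obtain ⟨htI, hφt⟩ := ht
    exact ⟨hφt, htI⟩
  have : supNorm05 φ ≤ h := by
    rw [supNorm05, eLpNorm_exponent_top]
    exact ENNReal.toReal_le_of_le_ofReal hh (eLpNormEssSup_le_of_ae_bound hae)
  linarith

/-- `p` is a Lebesgue density point of `E` (Besicovitch differentiation theorem). -/
lemma exists_mem_ofReal_le_volume_inter_Ioc {E : Set ℝ} (hE : MeasurableSet E)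
    (hpos : 0 < volume E) {ε : ℝ} (hε : 0 < ε) :
    ∃ p ∈ E, ∃ w, 0 < w ∧ w ≤ ε ∧ ENNReal.ofReal w ≤ volume (E ∩ Ioc (p - w) (p + w)) := by
  have : (ae (volume.restrict E)).NeBot :=
    ae_neBot.2 fun h0 => hpos.ne' (by rw [← Measure.restrict_apply_univ, h0]; rfl)
  obtain ⟨p, hp, hpE⟩ :=
    ((Besicovitch.ae_tendsto_measure_inter_div volume E).and (ae_restrict_mem hE)).exists
  obtain ⟨w, hw, hwε⟩ := ((hp.eventually (lt_mem_nhds (by norm_num : (2 : ℝ≥0∞)⁻¹ < 1))).and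
    (Ioc_mem_nhdsGT (show (0 : ℝ) < ε from hε))).exists
  refine ⟨p, hpE, w, hwε.1, hwε.2, ?_⟩
  have hball : volume (Metric.closedBall p w) = 2 * ENNReal.ofReal w := by
    rw [Real.volume_closedBall, ENNReal.ofReal_mul zero_le_two, ENNReal.ofReal_ofNat]
  rw [hball, ENNReal.lt_div_iff_mul_lt (by simp [hwε.1]) (by simp), ← mul_assoc,
    ENNReal.inv_mul_cancel two_ne_zero ENNReal.ofNat_ne_top, one_mul,
    Real.closedBall_eq_Icc] at hw
  exact hw.le.trans (measure_congr ((ae_eq_refl E).inter Ioc_ae_eq_Icc.symm)).le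

lemma mul_measureReal_le_integral {ψ : ℝ → ℝ} {E : Set ℝ} {a b h : ℝ} (hab : a ≤ b)
    (hψ : IntegrableOn ψ (Ioc a b)) (hψ0 : ∀ t, 0 ≤ ψ t) (hE : MeasurableSet E)
    (hhE : ∀ t ∈ E, h ≤ ψ t) :
    h * volume.real (E ∩ Ioc a b) ≤ ∫ t in a..b, ψ t := by
  have hfin : volume (E ∩ Ioc a b) ≠ ⊤ :=
    ne_top_of_le_ne_top measure_Ioc_lt_top.ne (measure_mono inter_subset_right)
  rw [intervalIntegral.integral_of_le hab, mul_comm, ← smul_eq_mul, ← setIntegral_const]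
  calc ∫ _ in E ∩ Ioc a b, h ≤ ∫ t in E ∩ Ioc a b, ψ t :=
        setIntegral_mono_on (integrableOn_const hfin) (hψ.mono_set inter_subset_right)
          (hE.inter measurableSet_Ioc) fun t ht => hhE t ht.1
    _ ≤ ∫ t in Ioc a b, ψ t :=
        setIntegral_mono_set hψ (ae_of_all _ hψ0) inter_subset_right.eventuallyLE

def gridSet (N : ℕ) (w : ℝ) : Set ℝ :=
  ⋃ k : ℤ, Metric.closedBall (2 * π * k / N) w

lemma measurableSet_gridSet (N : ℕ) (w : ℝ) : MeasurableSet (gridSet N w) :=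
  MeasurableSet.iUnion fun _ => measurableSet_closedBall

lemma add_two_pi_mem_gridSet_iff {N : ℕ} (hN : N ≠ 0) (w t : ℝ) :
    t + 2 * π ∈ gridSet N w ↔ t ∈ gridSet N w := by
  have hshift : ∀ (k : ℤ) (m : ℤ), 2 * π * ((k + m * N : ℤ) : ℝ) / N = 2 * π * k / N + 2 * π * m :=
    fun k m => by push_cast; field_simp
  simp only [gridSet, mem_iUnion, Metric.mem_closedBall, Real.dist_eq]
  constructor
  · rintro ⟨k, hk⟩
    exact ⟨k + (-1) * N, by rw [hshift]; convert hk using 2; push_cast; ring⟩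
  · rintro ⟨k, hk⟩
    exact ⟨k + 1 * N, by rw [hshift]; convert hk using 2; push_cast; ring⟩

lemma exists_closedBall_subset_gridSet {N : ℕ} (hN : 0 < N) (w x : ℝ) :
    ∃ g, |g - x| ≤ π / N ∧ Metric.closedBall g w ⊆ gridSet N w := by
  have hN' : (0 : ℝ) < N := Nat.cast_pos.2 hN
  refine ⟨2 * π * round (x * N / (2 * π)) / N, ?_, subset_iUnion_of_subset _ subset_rfl⟩
  have hround := abs_sub_round (x * N / (2 * π))
  calc |2 * π * round (x * N / (2 * π)) / N - x|
      = 2 * π / N * |x * N / (2 * π) - round (x * N / (2 * π))| := by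
        rw [abs_sub_comm, ← abs_of_pos (by positivity : 0 < 2 * π / N), ← abs_mul]
        congr 1; field_simp
    _ ≤ 2 * π / N * (1 / 2) := by gcongr
    _ = π / N := by ring

lemma natCast_card_Icc_ceil_floor_le {a b : ℝ} (hab : a ≤ b) :
    ((Finset.Icc ⌈a⌉ ⌊b⌋).card : ℝ) ≤ b - a + 1 := by
  have hlt : ⌈a⌉ < ⌊b⌋ + 2 := by
    have : (⌈a⌉ : ℝ) < ⌊b⌋ + 2 := by linarith [Int.ceil_lt_add_one a, Int.lt_floor_add_one b]
    exact_mod_cast this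
  rw [Int.card_Icc, ← Int.cast_natCast, Int.toNat_of_nonneg (by omega)]
  push_cast
  linarith [Int.floor_le b, Int.le_ceil a]

lemma volume_gridSet_inter_Icc_le {N : ℕ} (hN : 0 < N) {w : ℝ} (hw : w ≤ 1) (c : ℝ) :
    volume (gridSet N w ∩ Icc c (c + 2 * π)) ≤ ENNReal.ofReal (6 * N * w) := by
  have hN' : (1 : ℝ) ≤ N := Nat.one_le_cast.2 hN
  have hπ : 3 < π := pi_gt_three
  set K := Finset.Icc ⌈N * (c - 1) / (2 * π)⌉ ⌊N * (c + 2 * π + 1) / (2 * π)⌋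
  have hsub : gridSet N w ∩ Icc c (c + 2 * π) ⊆ ⋃ k ∈ K, Metric.closedBall (2 * π * k / N) w := by
    rintro t ⟨ht, htc⟩
    obtain ⟨k, hk⟩ := mem_iUnion.1 ht
    have hkt := abs_le.1 (Real.dist_eq _ _ ▸ Metric.mem_closedBall.1 hk)
    have hk_eq : (k : ℝ) = N * (2 * π * k / N) / (2 * π) := by field_simp
    refine mem_biUnion (x := k) (Finset.mem_Icc.2 ⟨Int.ceil_le.2 ?_, Int.le_floor.2 ?_⟩) hk <;>
      rw [hk_eq] <;> gcongr <;> linarith [htc.1, htc.2]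
  have hcard : (K.card : ℝ) ≤ 3 * N := by
    have hlen : N * (c + 2 * π + 1) / (2 * π) - N * (c - 1) / (2 * π) = N + N / π := by
      field_simp; ring
    have := div_le_self (Nat.cast_nonneg N) (by linarith : (1 : ℝ) ≤ π)
    linarith [natCast_card_Icc_ceil_floor_le (by gcongr; linarith : N * (c - 1) / (2 * π) ≤
      N * (c + 2 * π + 1) / (2 * π))]
  calc volume (gridSet N w ∩ Icc c (c + 2 * π))
      ≤ ∑ k ∈ K, volume (Metric.closedBall (2 * π * k / N : ℝ) w) :=
        (measure_mono hsub).trans (measure_biUnion_finset_le K _)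
    _ = K.card * ENNReal.ofReal (2 * w) := by
        simp only [Real.volume_closedBall, Finset.sum_const, nsmul_eq_mul]
    _ ≤ ENNReal.ofReal (3 * N) * ENNReal.ofReal (2 * w) := by
        gcongr
        rw [← ENNReal.ofReal_natCast]
        exact ENNReal.ofReal_le_ofReal hcard
    _ = ENNReal.ofReal (6 * N * w) := by
        rw [← ENNReal.ofReal_mul (by positivity)]; ring_nf

section Superposition

variable {N : ℕ → ℕ} {w a : ℕ → ℝ}

noncomputable def gridSum (N : ℕ → ℕ) (w a : ℕ → ℝ) (t : ℝ) : ℝ≥0∞ :=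
  ∑' n, (gridSet (N n) (w n)).indicator (fun _ => ENNReal.ofReal (a n)) t

lemma measurable_gridSum : Measurable (gridSum N w a) :=
  Measurable.tsum fun _ => measurable_const.indicator (measurableSet_gridSet _ _)

lemma ofReal_le_gridSum {n : ℕ} {t : ℝ} (ht : t ∈ gridSet (N n) (w n)) :
    ENNReal.ofReal (a n) ≤ gridSum N w a t :=
  (indicator_of_mem ht fun _ => ENNReal.ofReal (a n)).symm.trans_le
    (ENNReal.le_tsum (f := fun n => (gridSet (N n) (w n)).indicator _ t) n)

lemma gridSum_add_two_pi (hN : ∀ n, 0 < N n) (t : ℝ) :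
    gridSum N w a (t + 2 * π) = gridSum N w a t := by
  unfold gridSum
  refine tsum_congr fun n => ?_
  by_cases ht : t ∈ gridSet (N n) (w n)
  · rw [indicator_of_mem ht, indicator_of_mem ((add_two_pi_mem_gridSet_iff (hN n).ne' _ _).2 ht)]
  · rw [indicator_of_notMem ht,
      indicator_of_notMem (mt (add_two_pi_mem_gridSet_iff (hN n).ne' _ _).1 ht)]

lemma lintegral_gridSum_Icc_lt_top (hN : ∀ n, 0 < N n) (hw : ∀ n, w n ≤ 1) (ha : ∀ n, 0 ≤ a n)
    (hsum : Summable fun n => a n * N n * w n) (c : ℝ) :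
    ∫⁻ t in Icc c (c + 2 * π), gridSum N w a t < ⊤ := by
  simp only [gridSum]
  rw [lintegral_tsum fun n =>
    (measurable_const.indicator (measurableSet_gridSet _ _)).aemeasurable]
  refine lt_of_le_of_lt (ENNReal.tsum_le_tsum fun n => ?_) (hsum.mul_left 6).tsum_ofReal_lt_top
  rw [lintegral_indicator_const (measurableSet_gridSet _ _),
    Measure.restrict_apply (measurableSet_gridSet _ _)]
  calc ENNReal.ofReal (a n) * volume (gridSet (N n) (w n) ∩ Icc c (c + 2 * π))
      ≤ ENNReal.ofReal (a n) * ENNReal.ofReal (6 * N n * w n) := by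
        gcongr; exact volume_gridSet_inter_Icc_le (hN n) (hw n) c
    _ = ENNReal.ofReal (6 * (a n * N n * w n)) := by
        rw [← ENNReal.ofReal_mul (ha n)]; ring_nf

lemma ae_gridSum_lt_top (hN : ∀ n, 0 < N n) (hw : ∀ n, w n ≤ 1) (ha : ∀ n, 0 ≤ a n)
    (hsum : Summable fun n => a n * N n * w n) : ∀ᵐ t, gridSum N w a t < ⊤ := by
  rw [← Measure.restrict_univ (μ := volume), ← iUnion_Icc_add_zsmul two_pi_pos 0,
    ae_restrict_iUnion_iff]
  intro m
  simp only [zero_add, add_zsmul, one_zsmul]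
  exact ae_lt_top measurable_gridSum (lintegral_gridSum_Icc_lt_top hN hw ha hsum _).ne

/-- `f := (gridSum N w a ·).toReal` vanishes where the series diverges, hence the
almost-everywhere bound. -/
theorem exists_periodic_ge_on_gridSet (hN : ∀ n, 0 < N n) (hw : ∀ n, w n ≤ 1)
    (ha : ∀ n, 0 ≤ a n) (hsum : Summable fun n => a n * N n * w n) :
    ∃ f : ℝ → ℝ, (∀ t, 0 ≤ f t) ∧ (∀ t, f (t + 2 * π) = f t) ∧
      IntervalIntegrable f volume (-π) π ∧
      ∀ n, ∀ᵐ t, t ∈ gridSet (N n) (w n) → a n ≤ f t := by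
  refine ⟨fun t => (gridSum N w a t).toReal, fun t => ENNReal.toReal_nonneg,
    fun t => congrArg ENNReal.toReal (gridSum_add_two_pi hN t), ?_, fun n => ?_⟩
  · rw [intervalIntegrable_iff_integrableOn_Icc_of_le (by linarith [pi_pos])]
    refine integrable_toReal_of_lintegral_ne_top measurable_gridSum.aemeasurable ?_
    simpa [show -π + 2 * π = π by ring] using
      (lintegral_gridSum_Icc_lt_top hN hw ha hsum (-π)).ne
  · filter_upwards [ae_gridSum_lt_top hN hw ha hsum] with t hfin ht
    simpa only [ENNReal.toReal_ofReal (ha n)] using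
      ENNReal.toReal_mono hfin.ne (ofReal_le_gridSum ht)

end Superposition

lemma mul_integral_le_integral_mul_of_closedBall {ψ f : ℝ → ℝ} {M w g p a : ℝ}
    (hψm : Measurable ψ) (hψM : ∀ t, |ψ t| ≤ M) (hψ0 : ∀ t, 0 ≤ ψ t)
    (hψper : ∀ t, ψ (t + 2 * π) = ψ t) (hf0 : ∀ t, 0 ≤ f t) (hfper : ∀ t, f (t + 2 * π) = f t)
    (hfint : IntervalIntegrable f volume (-π) π) (hw0 : 0 ≤ w) (hwπ : w ≤ π)
    (hfa : ∀ᵐ t, t ∈ Metric.closedBall g w → a ≤ f t) :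
    a * ∫ s in (p - w)..(p + w), ψ s ≤ ∫ t in (-π)..π, ψ (g + p - t) * f t := by
  have hFper : Function.Periodic (fun t => ψ (g + p - t) * f t) (2 * π) := fun t => by
    simp only [hfper, sub_add_eq_sub_sub]
    rw [← hψper (g + p - t - 2 * π), sub_add_cancel]
  have hfint' := Function.Periodic.intervalIntegrable hfper two_pi_pos.ne'
    (by rwa [show -π + 2 * π = π by ring])
  have hψθm : Measurable fun t => ψ (g + p - t) := hψm.comp (measurable_const.sub measurable_id)
  have hFint : ∀ u v, IntervalIntegrable (fun t => ψ (g + p - t) * f t) volume u v :=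
    fun u v => intervalIntegrable_iff.2 ((intervalIntegrable_iff.1 (hfint' u v)).bdd_mul
      hψθm.aestronglyMeasurable (ae_of_all _ fun t => (Real.norm_eq_abs _).trans_le (hψM _)))
  have hψθa : IntervalIntegrable (fun t => ψ (g + p - t) * a) volume (g - w) (g + w) :=
    (intervalIntegrable_const (c := M)).mono_fun hψθm.aestronglyMeasurable
      (ae_of_all _ fun t => by simpa using (hψM _).trans (le_abs_self M)) |>.mul_const a
  calc a * ∫ s in (p - w)..(p + w), ψ s = ∫ t in (g - w)..(g + w), ψ (g + p - t) * a := by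
        rw [intervalIntegral.integral_mul_const, intervalIntegral.integral_comp_sub_left, mul_comm]
        ring_nf
    _ ≤ ∫ t in (g - w)..(g + w), ψ (g + p - t) * f t := by
        refine intervalIntegral.integral_mono_ae_restrict (by linarith) hψθa (hFint _ _) ?_
        rw [EventuallyLE, ae_restrict_iff' measurableSet_Icc, ← Real.closedBall_eq_Icc]
        filter_upwards [hfa] with t hfa ht
        exact mul_le_mul_of_nonneg_left (hfa ht) (hψ0 _)
    _ ≤ ∫ t in (g - π)..(g + π), ψ (g + p - t) * f t :=
        intervalIntegral.integral_mono_interval (by linarith) (by linarith) (by linarith)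
          (ae_of_all _ fun t => mul_nonneg (hψ0 _) (hf0 _)) (hFint _ _)
    _ = ∫ t in (-π)..π, ψ (g + p - t) * f t := by
        have := hFper.intervalIntegral_add_eq (g - π) (-π)
        rwa [show g - π + 2 * π = g + π by ring, show -π + 2 * π = π by ring] at this

lemma exists_window_mul_le_integral {ψ : ℝ → ℝ} {M D h ε : ℝ} (hψm : Measurable ψ)
    (hψM : ∀ t, |ψ t| ≤ M) (hψ0 : ∀ t, 0 ≤ ψ t) (hD : ∫ x in (-π)..π, symMaj05 ψ x ≤ D)
    (hh : 0 ≤ h) (hlt : h < supNorm05 ψ) (hε : 0 < ε) :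
    ∃ p w, 2 * |p| * h ≤ D ∧ 0 < w ∧ w ≤ ε ∧ h * w ≤ ∫ s in (p - w)..(p + w), ψ s := by
  set E := {t | h < |ψ t|} ∩ Ioc (-π) π
  have hE : MeasurableSet E := (measurableSet_lt measurable_const hψm.abs).inter measurableSet_Ioc
  have hψE : ∀ t ∈ E, h ≤ ψ t := fun t ht => (ht.1.trans_eq (abs_of_nonneg (hψ0 t))).le
  obtain ⟨p, hpE, w, hw0, hwε, hwE⟩ :=
    exists_mem_ofReal_le_volume_inter_Ioc hE (volume_pos_of_lt_supNorm05 hh hlt) hε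
  refine ⟨p, w, (mul_le_integral_symMaj05 hψM (abs_le.2 ⟨hpE.2.1.le, hpE.2.2⟩)
    (hψE p hpE)).trans hD, hw0, hwε, ?_⟩
  have hfin : volume (E ∩ Ioc (p - w) (p + w)) ≠ ⊤ :=
    ne_top_of_le_ne_top measure_Ioc_lt_top.ne (measure_mono inter_subset_right)
  calc h * w ≤ h * volume.real (E ∩ Ioc (p - w) (p + w)) :=
        mul_le_mul_of_nonneg_left ((ENNReal.ofReal_le_iff_le_toReal hfin).1 hwE) hh
    _ ≤ ∫ s in (p - w)..(p + w), ψ s :=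
        mul_measureReal_le_integral (by linarith)
          (Measure.integrableOn_of_bounded measure_Ioc_lt_top.ne hψm.aestronglyMeasurable
            (ae_of_all _ fun t => (Real.norm_eq_abs _).trans_le (hψM t))) hψ0 hE hψE

/-- A spike of `ψ` of height `h = B / (2λ)` sits within `λ / 2` of the origin (by the bound `D` on
`∫ ψ*`), and its mass `≥ h w` on a window of width `2w` is scaled to `K`; the grid of spacing
`≈ λ / 2` then costs `a N w ≈ K / (h λ)`. -/
lemma exists_grid_window {ψ : ℝ → ℝ} {M D lam B K : ℝ} (hψm : Measurable ψ)
    (hψM : ∀ t, |ψ t| ≤ M) (hψ0 : ∀ t, 0 ≤ ψ t) (hD : ∫ x in (-π)..π, symMaj05 ψ x ≤ D)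
    (hlam0 : 0 < lam) (hlam1 : lam ≤ 1) (hB0 : 0 < B) (hBD : 2 * |D| ≤ B)
    (hBψ : B ≤ lam * supNorm05 ψ) (hK : 0 ≤ K) :
    ∃ (p w : ℝ) (N : ℕ) (a : ℝ), 0 < N ∧ 0 < w ∧ w ≤ 1 ∧ 0 ≤ a ∧ a * N * w ≤ 16 * π * K / B ∧
      |p| + π / N ≤ lam ∧ K ≤ a * ∫ s in (p - w)..(p + w), ψ s := by
  set h := B / (2 * lam)
  have hh : 0 < h := by positivity
  have hhψ : h < supNorm05 ψ := by
    rw [div_lt_iff₀ (by positivity)]; linarith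
  obtain ⟨p, w, hpD, hw0, hw1, hwψ⟩ :=
    exists_window_mul_le_integral hψm hψM hψ0 hD hh.le hhψ one_pos
  set N := ⌈4 * π / lam⌉₊
  have hNlow : 4 * π ≤ lam * N := by
    rw [← div_le_iff₀' hlam0]; exact Nat.le_ceil _
  have hNup : lam * N ≤ 8 * π := by
    have := Nat.ceil_lt_add_one (by positivity : 0 ≤ 4 * π / lam)
    rw [← le_div_iff₀' hlam0]
    have : 4 * π / lam + 1 ≤ 8 * π / lam := by
      rw [← sub_nonneg,
        show 8 * π / lam - (4 * π / lam + 1) = (4 * π - lam) / lam by field_simp; ring]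
      exact div_nonneg (by linarith [pi_gt_three]) hlam0.le
    linarith
  have hN : 0 < N := Nat.ceil_pos.2 (by positivity)
  have hN' : (0 : ℝ) < N := Nat.cast_pos.2 hN
  refine ⟨p, w, N, K / (h * w), hN, hw0, hw1, by positivity, ?_, ?_, ?_⟩
  · have e : K / (h * w) * N * w = 2 * K * (lam * N) / B := by simp only [h]; field_simp
    rw [e, show 16 * π * K = 2 * K * (8 * π) by ring]
    gcongr
  · have hp : |p| * B ≤ |D| * lam := by
      have e : 2 * |p| * h = |p| * B / lam := by simp only [h]; field_simp
      rw [e, div_le_iff₀ hlam0] at hpD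
      linarith [mul_le_mul_of_nonneg_right (le_abs_self D) hlam0.le]
    have hp' : |p| ≤ lam / 2 := by nlinarith [abs_nonneg p]
    have hπN : π / N ≤ lam / 2 := by rw [div_le_iff₀ hN']; nlinarith [pi_pos]
    linarith
  · calc K = K / (h * w) * (h * w) := by field_simp
      _ ≤ K / (h * w) * ∫ s in (p - w)..(p + w), ψ s := by gcongr

lemma exists_stage (φ : ℝ → ℝ → ℝ) (lam : ℝ → ℝ)
    (hmeas : ∀ r ∈ Ioo (0 : ℝ) 1, Measurable (φ r))
    (hbdd : ∀ r ∈ Ioo (0 : ℝ) 1, ∃ M, ∀ t, |φ r t| ≤ M)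
    (hnonneg : ∀ r ∈ Ioo (0 : ℝ) 1, ∀ t, 0 ≤ φ r t) {D : ℝ}
    (hD : ∀ r ∈ Ioo (0 : ℝ) 1, ∫ x in (-π)..π, symMaj05 (φ r) x ≤ D)
    (hlampos : ∀ r ∈ Ioo (0 : ℝ) 1, 0 < lam r) (hlam0 : Tendsto lam (𝓝[<] 1) (𝓝 0))
    (hbound : ∀ C, ∃ᶠ r in 𝓝[<] (1 : ℝ), C ≤ lam r * supNorm05 (φ r)) (n : ℕ) :
    ∃ r ∈ Ioo (0 : ℝ) 1, 1 - 1 / ((n : ℝ) + 1) < r ∧ ∃ (p w : ℝ) (N : ℕ) (a : ℝ),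
      0 < N ∧ 0 < w ∧ w ≤ 1 ∧ 0 ≤ a ∧ a * N * w ≤ (1 / 2) ^ n ∧ |p| + π / N ≤ lam r ∧
      n + 1 ≤ a * ∫ s in (p - w)..(p + w), φ r s := by
  set B := 16 * π * (n + 1) * 2 ^ n + 2 * |D|
  have hB0 : 0 < B := by positivity
  have hnear : ∀ᶠ r in 𝓝[<] (1 : ℝ), r ∈ Ioo (max 0 (1 - 1 / ((n : ℝ) + 1))) 1 :=
    Ioo_mem_nhdsLT (max_lt one_pos (sub_lt_self _ (by positivity)))
  obtain ⟨r, hrB, hlam1, hr⟩ :=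
    ((hbound B).and_eventually ((hlam0.eventually (ge_mem_nhds one_pos)).and hnear)).exists
  have hr01 : r ∈ Ioo (0 : ℝ) 1 := ⟨(le_max_left _ _).trans_lt hr.1, hr.2⟩
  obtain ⟨M, hM⟩ := hbdd r hr01
  obtain ⟨p, w, N, a, hN, hw0, hw1, ha, haNw, hp, hK⟩ :=
    exists_grid_window (hmeas r hr01) hM (hnonneg r hr01) (hD r hr01) (hlampos r hr01) hlam1 hB0
      (le_add_of_nonneg_left (by positivity)) hrB (K := n + 1) (by positivity)
  refine ⟨r, hr01, (le_max_right _ _).trans_lt hr.1, p, w, N, a, hN, hw0, hw1, ha,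
    haNw.trans ?_, hp, hK⟩
  calc 16 * π * (n + 1) / B ≤ 16 * π * (n + 1) / (16 * π * (n + 1) * 2 ^ n) := by
        gcongr; exact le_add_of_nonneg_right (by positivity)
    _ = (1 / 2) ^ n := by field_simp; rw [← mul_pow]; norm_num

lemma tendsto_nhdsLT_one_of_one_sub_inv_lt {r : ℕ → ℝ} (hr1 : ∀ n, r n < 1)
    (hr : ∀ n : ℕ, 1 - 1 / ((n : ℝ) + 1) < r n) : Tendsto r atTop (𝓝[<] 1) := by
  refine tendsto_nhdsWithin_iff.2 ⟨?_, Eventually.of_forall hr1⟩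
  have hlow : Tendsto (fun n : ℕ => 1 - 1 / ((n : ℝ) + 1)) atTop (𝓝 1) := by
    simpa using tendsto_const_nhds.sub (tendsto_one_div_add_atTop_nhds_zero_nat (𝕜 := ℝ))
  exact tendsto_of_tendsto_of_tendsto_of_le_of_le hlow tendsto_const_nhds (fun n => (hr n).le)
    fun n => (hr1 n).le

end SharpnessDivergence

open SharpnessDivergence

theorem sharpness_divergence_everywhere_general
    (φ : ℝ → ℝ → ℝ) (lam : ℝ → ℝ)
    (hmeas : ∀ r ∈ Set.Ioo (0 : ℝ) 1, Measurable (φ r))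
    (hper : ∀ r ∈ Set.Ioo (0 : ℝ) 1, ∀ t, φ r (t + 2 * π) = φ r t)
    (hbdd : ∀ r ∈ Set.Ioo (0 : ℝ) 1, ∃ M, ∀ t, |φ r t| ≤ M)
    (hnonneg : ∀ r ∈ Set.Ioo (0 : ℝ) 1, ∀ t, 0 ≤ φ r t)
    (hAI3 : ∃ C, ∀ r ∈ Set.Ioo (0 : ℝ) 1, (∫ x in (-π)..π, symMaj05 (φ r) x) ≤ C)
    (hlampos : ∀ r ∈ Set.Ioo (0 : ℝ) 1, 0 < lam r)
    (hlam0 : Tendsto lam (𝓝[<] (1 : ℝ)) (𝓝 0))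
    (hbound : ∀ C, ∃ᶠ r in 𝓝[<] (1 : ℝ), C ≤ lam r * supNorm05 (φ r)) :
    ∃ f : ℝ → ℝ, (∀ t, 0 ≤ f t) ∧ (∀ t, f (t + 2 * π) = f t) ∧
      IntervalIntegrable f volume (-π) π ∧
      ∀ x : ℝ, ∀ C : ℝ, ∃ᶠ r in 𝓝[<] (1 : ℝ),
        ∃ θ, |θ - x| ≤ lam r ∧ C ≤ ∫ t in (-π)..π, φ r (θ - t) * f t := by
  obtain ⟨D, hD⟩ := hAI3
  choose r hr hr_lower p w N a hN hw0 hw1 ha haNw hp hmass using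
    exists_stage φ lam hmeas hbdd hnonneg hD hlampos hlam0 hbound
  obtain ⟨f, hf0, hfper, hfint, hfa⟩ := exists_periodic_ge_on_gridSet hN hw1 ha
    (summable_geometric_two.of_nonneg_of_le
      (fun n => mul_nonneg (mul_nonneg (ha n) (Nat.cast_nonneg _)) (hw0 n).le) haNw)
  refine ⟨f, hf0, hfper, hfint, fun x C => ?_⟩
  obtain ⟨n₀, hn₀⟩ := exists_nat_ge C
  refine (tendsto_nhdsLT_one_of_one_sub_inv_lt (fun n => (hr n).2) hr_lower).frequently
    (eventually_atTop.2 ⟨n₀, fun n hn => ?_⟩).frequently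
  obtain ⟨g, hgx, hball⟩ := exists_closedBall_subset_gridSet (hN n) (w n) x
  obtain ⟨M, hM⟩ := hbdd (r n) (hr n)
  refine ⟨g + p n, ?_, ?_⟩
  · calc |g + p n - x| ≤ |g - x| + |p n| := by
          rw [add_sub_right_comm]; exact abs_add_le _ _
      _ ≤ lam (r n) := by linarith [hp n]
  · calc C ≤ n + 1 := hn₀.trans (by norm_cast; omega)
      _ ≤ a n * ∫ s in (p n - w n)..(p n + w n), φ (r n) s := hmass n
      _ ≤ ∫ t in (-π)..π, φ (r n) (g + p n - t) * f t :=
        mul_integral_le_integral_mul_of_closedBall (hmeas _ (hr n)) hM (hnonneg _ (hr n))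
          (hper _ (hr n)) hf0 hfper hfint (hw0 n).le (by linarith [hw1 n, pi_gt_three])
          ((hfa n).mono fun t ht hball' => ht (hball hball'))

/-- Theorem 3: if `{φ_r}` is a nonnegative approximation of identity
and `limsup λ(r)‖φ_r‖_∞ = ∞`, then there is a nonnegative `f ∈ L¹(𝕋)` whose
convolutions `Φ_r(θ, f)` have `limsup_{r→1} sup_{|θ-x|≤λ(r)} Φ_r(θ, f) = ∞`
at every point `x` of the circle. -/
theorem sharpness_divergence_everywhere
    (φ : ℝ → ℝ → ℝ) (lam : ℝ → ℝ)
    (hmeas : ∀ r ∈ Set.Ioo (0 : ℝ) 1, Measurable (φ r))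
    (hper : ∀ r ∈ Set.Ioo (0 : ℝ) 1, ∀ t, φ r (t + 2 * π) = φ r t)
    (hbdd : ∀ r ∈ Set.Ioo (0 : ℝ) 1, ∃ M, ∀ t, |φ r t| ≤ M)
    (hnonneg : ∀ r ∈ Set.Ioo (0 : ℝ) 1, ∀ t, 0 ≤ φ r t)
    (hAI1 : Tendsto (fun r => ∫ t in (-π)..π, φ r t) (𝓝[<] (1 : ℝ)) (𝓝 1))
    (hAI2 : ∀ x ∈ Set.Ioo (0 : ℝ) π,
      Tendsto (fun r => symMaj05 (φ r) x) (𝓝[<] (1 : ℝ)) (𝓝 0))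
    (hAI3 : ∃ C, ∀ r ∈ Set.Ioo (0 : ℝ) 1, (∫ x in (-π)..π, symMaj05 (φ r) x) ≤ C)
    (hlampos : ∀ r ∈ Set.Ioo (0 : ℝ) 1, 0 < lam r)
    (hlamdec : AntitoneOn lam (Set.Ioo (0 : ℝ) 1))
    (hlam0 : Tendsto lam (𝓝[<] (1 : ℝ)) (𝓝 0))
    (hbound : ∀ C, ∃ᶠ r in 𝓝[<] (1 : ℝ), C ≤ lam r * supNorm05 (φ r)) :
    ∃ f : ℝ → ℝ, (∀ t, 0 ≤ f t) ∧ (∀ t, f (t + 2 * π) = f t) ∧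
      IntervalIntegrable f volume (-π) π ∧
      ∀ x : ℝ, ∀ C : ℝ, ∃ᶠ r in 𝓝[<] (1 : ℝ),
        ∃ θ, |θ - x| ≤ lam r ∧ C ≤ ∫ t in (-π)..π, φ r (θ - t) * f t :=
  sharpness_divergence_everywhere_general φ lam hmeas hper hbdd hnonneg hAI3 hlampos hlam0 hbound
end

section
/- Let {φ_r} be a regular approximation of identity on 𝕋 consisting of even functions (each φ_r ≥ 0, even, decreasing on [0,π], ∫_𝕋 φ_r → 1), and λ(r) → 0 as r → 1. Define γ_λ = lim_{τ→1} ( limsup_{δ→0} sup_{τ<r<1} ∫_{-δλ(r)}^{δλ(r)} φ_r(t) dt ). If γ_λ = 0, then for every f ∈ L^∞(𝕋) and every Lebesgue point x of f, lim_{r→1} sup_{|θ-x|≤λ(r)} |∫_𝕋 φ_r(θ-t) f(t) dt - f(x)| = 0. -/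
open MeasureTheory Real Set Filter Topology

/-!
Write `Φ_r(θ, f) - f(x) = ∫ φ_r(s) (f(θ - s) - f(x)) ds + (∫ φ_r - 1) f(x)` and split the first
integral into `|s| ≤ δλ(r)`, `δλ(r) ≤ |s| ≤ b` and `b ≤ |s| ≤ π`, where `b` is the dyadic multiple
of `δλ(r)` in `(η, 2η]`. On the first piece `|f(θ - s) - f(x)|` is bounded and the mass of `φ_r`
is small because `γ_λ = 0`; on the last one `φ_r ≤ φ_r(η) → 0`. The middle piece is cut into
blocks `[2^k δλ(r), 2^(k+1) δλ(r)]`. On a block `φ_r` is at most its value at the left end, which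
monotonicity bounds by the average of `φ_r` over the previous block; and since `|θ - x| ≤ λ(r)`
is at most `1/δ` times the block size, the integral of `|f - f(x)|` over the block seen from `θ`
is controlled by a window around `x` of comparable size, which the Lebesgue point condition
makes small. Summing, the middle piece is a small multiple of `∫ φ_r`.
-/

lemma exists_pos_ae_abs_sub_le {α : Type*} [MeasurableSpace α] {μ : Measure α} {f : α → ℝ}
    (hf : ∃ C, ∀ᵐ t ∂μ, |f t| ≤ C) (y : ℝ) : ∃ C > 0, ∀ᵐ t ∂μ, |f t - y| ≤ C := by
  obtain ⟨C₀, hC₀⟩ := hf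
  refine ⟨|C₀| + |y| + 1, by positivity, hC₀.mono fun t ht => ?_⟩
  linarith [abs_sub (f t) y, le_abs_self C₀]

lemma Measurable.intervalIntegrable_of_ae_abs_le {u : ℝ → ℝ} (hu : Measurable u) {K : ℝ}
    (hK : ∀ᵐ t, |u t| ≤ K) (a b : ℝ) : IntervalIntegrable u volume a b :=
  IntervalIntegrable.mono_fun' (g := fun _ => K) intervalIntegrable_const
    hu.aestronglyMeasurable.restrict (ae_restrict_of_ae (by simpa only [Real.norm_eq_abs] using hK))

lemma IntervalIntegrable.mono_of_mem_Icc {f : ℝ → ℝ} {a b u v : ℝ}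
    (hf : IntervalIntegrable f volume a b) (hu : u ∈ Icc a b) (hv : v ∈ Icc a b) :
    IntervalIntegrable f volume u v :=
  hf.mono_set (uIcc_subset_uIcc (Icc_subset_uIcc hu) (Icc_subset_uIcc hv))

lemma IntervalIntegrable.bdd_mul {ψ G : ℝ → ℝ} {a b M : ℝ}
    (hψ : IntervalIntegrable ψ volume a b) (hM : ∀ s ∈ uIcc a b, |ψ s| ≤ M)
    (hG : IntervalIntegrable G volume a b) :
    IntervalIntegrable (fun s => ψ s * G s) volume a b := by
  rw [intervalIntegrable_iff] at *
  exact Integrable.bdd_mul hG hψ.aestronglyMeasurable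
    (ae_restrict_of_forall_mem measurableSet_uIoc fun s hs => hM s (uIoc_subset_uIcc hs))

lemma AntitoneOn.intervalIntegrable_mul {ψ G : ℝ → ℝ} {a b : ℝ} (hab : a ≤ b)
    (hψ : AntitoneOn ψ (Icc a b)) (hG : IntervalIntegrable G volume a b) :
    IntervalIntegrable (fun s => ψ s * G s) volume a b := by
  rw [← uIcc_of_le hab] at hψ
  refine (hψ.intervalIntegrable).bdd_mul (M := |ψ a| + |ψ b|) (fun s hs => ?_) hG
  rw [uIcc_of_le hab] at hψ hs
  have hlo : ψ b ≤ ψ s := hψ hs ⟨hab, le_rfl⟩ hs.2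
  have hhi : ψ s ≤ ψ a := hψ ⟨le_rfl, hab⟩ hs hs.1
  rw [abs_le]
  constructor <;> linarith [neg_abs_le (ψ b), le_abs_self (ψ a), abs_nonneg (ψ a), abs_nonneg (ψ b)]

lemma AntitoneOn.intervalIntegrable_of_even {ψ : ℝ → ℝ} {c : ℝ} (hc : 0 ≤ c)
    (hψ_even : ∀ s, ψ (-s) = ψ s) (hψ : AntitoneOn ψ (Icc 0 c)) :
    IntervalIntegrable ψ volume (-c) c := by
  have hψ_right : IntervalIntegrable ψ volume 0 c := (uIcc_of_le hc ▸ hψ).intervalIntegrable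
  have hψ_left : IntervalIntegrable ψ volume (-c) 0 := by
    simpa [hψ_even] using ((IntervalIntegrable.iff_comp_neg).mp hψ_right).symm
  exact hψ_left.trans hψ_right

lemma AntitoneOn.intervalIntegrable_mul_of_even {ψ G : ℝ → ℝ} {c : ℝ} (hc : 0 ≤ c)
    (hψ_even : ∀ s, ψ (-s) = ψ s) (hψ0 : ∀ s, 0 ≤ ψ s) (hψ : AntitoneOn ψ (Icc 0 c))
    (hG : IntervalIntegrable G volume (-c) c) :
    IntervalIntegrable (fun s => ψ s * G s) volume (-c) c := by
  refine (hψ.intervalIntegrable_of_even hc hψ_even).bdd_mul (M := ψ 0) (fun s hs => ?_) hG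
  rw [uIcc_of_le (by linarith), mem_Icc, ← abs_le] at hs
  have hψ_abs : ψ |s| = ψ s := by
    rcases abs_choice s with h | h <;> rw [h]
    exact hψ_even s
  rw [abs_of_nonneg (hψ0 s), ← hψ_abs]
  exact hψ ⟨le_rfl, hc⟩ ⟨abs_nonneg s, hs⟩ (abs_nonneg s)

lemma integral_symm_eq_add_integral_add_comp_neg {F : ℝ → ℝ} {a c : ℝ} (ha : 0 ≤ a) (hac : a ≤ c)
    (hF : IntervalIntegrable F volume (-c) c) :
    ∫ s in (-c)..c, F s = (∫ s in (-a)..a, F s) + ∫ s in a..c, (F s + F (-s)) := by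
  have hmem : ∀ {u}, -c ≤ u → u ≤ c → u ∈ Icc (-c) c := fun h₁ h₂ => ⟨h₁, h₂⟩
  have hleft : IntervalIntegrable F volume (-c) (-a) :=
    hF.mono_of_mem_Icc (hmem le_rfl (by linarith)) (hmem (by linarith) (by linarith))
  have hneg : IntervalIntegrable (fun s => F (-s)) volume a c := by
    simpa using ((IntervalIntegrable.iff_comp_neg).mp hleft).symm
  rw [intervalIntegral.integral_add
      (hF.mono_of_mem_Icc (hmem (by linarith) hac) (hmem (by linarith) le_rfl)) hneg,
    intervalIntegral.integral_comp_neg, ← intervalIntegral.integral_add_adjacent_intervals hleft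
      (hF.mono_of_mem_Icc (hmem (by linarith) (by linarith)) (hmem (by linarith) le_rfl)),
    ← intervalIntegral.integral_add_adjacent_intervals
      (hF.mono_of_mem_Icc (hmem (by linarith) (by linarith)) (hmem (by linarith) hac))
      (hF.mono_of_mem_Icc (hmem (by linarith) hac) (hmem (by linarith) le_rfl))]
  ring

lemma integral_mul_le_of_antitoneOn_block {ψ G : ℝ → ℝ} {h K : ℝ} (hh : 0 < h)
    (hψ : AntitoneOn ψ (Icc 0 (2 * h))) (hψ0 : 0 ≤ ψ h) (hG0 : ∀ s, 0 ≤ G s)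
    (hG : IntervalIntegrable G volume 0 (2 * h)) (hK : 0 ≤ K)
    (hGK : ∫ s in 0..2 * h, G s ≤ K * (2 * h)) :
    ∫ s in h..2 * h, ψ s * G s ≤ 4 * K * ∫ s in h / 2..h, ψ s := by
  have hh2 : h ≤ 2 * h := by linarith
  have hsub : Icc h (2 * h) ⊆ Icc 0 (2 * h) := Icc_subset_Icc_left hh.le
  have hψG : IntervalIntegrable (fun s => ψ s * G s) volume h (2 * h) :=
    (hψ.mono hsub).intervalIntegrable_mul hh2
      (hG.mono_of_mem_Icc ⟨hh.le, hh2⟩ ⟨by linarith, le_rfl⟩)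
  have hψi : IntervalIntegrable ψ volume (h / 2) h := by
    refine AntitoneOn.intervalIntegrable (hψ.mono ?_)
    rw [uIcc_of_le (by linarith)]
    exact Icc_subset_Icc (by linarith) (by linarith)
  have hGh : ∫ s in h..2 * h, G s ≤ ∫ s in 0..2 * h, G s :=
    intervalIntegral.integral_mono_interval hh.le hh2 le_rfl (ae_of_all _ hG0) hG
  have hψh : (h - h / 2) * ψ h ≤ ∫ s in h / 2..h, ψ s := by
    rw [← smul_eq_mul, ← intervalIntegral.integral_const]
    refine intervalIntegral.integral_mono_on (by linarith) intervalIntegrable_const hψi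
      fun s hs => hψ ⟨by linarith [hs.1], by linarith [hs.2]⟩ ⟨hh.le, hh2⟩ hs.2
  calc ∫ s in h..2 * h, ψ s * G s
      ≤ ∫ s in h..2 * h, ψ h * G s := by
        refine intervalIntegral.integral_mono_on hh2 hψG
          ((hG.mono_of_mem_Icc ⟨hh.le, hh2⟩ ⟨by linarith, le_rfl⟩).const_mul _) fun s hs => ?_
        exact mul_le_mul_of_nonneg_right (hψ ⟨hh.le, hh2⟩ (hsub hs) hs.1) (hG0 s)
    _ = ψ h * ∫ s in h..2 * h, G s := intervalIntegral.integral_const_mul _ _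
    _ ≤ ψ h * (K * (2 * h)) := by gcongr; exact hGh.trans hGK
    _ = 4 * K * ((h - h / 2) * ψ h) := by ring
    _ ≤ 4 * K * ∫ s in h / 2..h, ψ s := by gcongr

lemma le_two_pow_mul_le {a : ℝ} {k N : ℕ} (ha : 0 ≤ a) (hk : k ≤ N) :
    a ≤ 2 ^ k * a ∧ 2 ^ k * a ≤ 2 ^ N * a :=
  ⟨le_mul_of_one_le_left ha (one_le_pow₀ one_le_two),
    mul_le_mul_of_nonneg_right (pow_le_pow_right₀ one_le_two hk) ha⟩

lemma sum_integral_dyadic_eq {f : ℝ → ℝ} {a c : ℝ} {N : ℕ} (ha : 0 ≤ a) (hNc : 2 ^ N * a ≤ c)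
    (hf : IntervalIntegrable f volume 0 c) :
    ∑ k ∈ Finset.range N, ∫ s in 2 ^ k * a..2 * (2 ^ k * a), f s = ∫ s in a..2 ^ N * a, f s := by
  have hmem : ∀ k ≤ N, 2 ^ k * a ∈ Icc 0 c := fun k hk =>
    ⟨by positivity, (le_two_pow_mul_le ha hk).2.trans hNc⟩
  have h := intervalIntegral.sum_integral_adjacent_intervals (a := fun k => 2 ^ k * a)
    fun k hk => hf.mono_of_mem_Icc (hmem k hk.le) (hmem (k + 1) hk)
  rw [pow_zero, one_mul] at h
  rw [← h]
  exact Finset.sum_congr rfl fun k _ => by congr 1; ring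

lemma integral_mul_le_of_antitoneOn_dyadic {ψ G : ℝ → ℝ} {a c K : ℝ} {N : ℕ} (ha : 0 < a)
    (hNc : 2 ^ N * a ≤ c) (hψ : AntitoneOn ψ (Icc 0 c)) (hψ0 : ∀ s ∈ Icc 0 c, 0 ≤ ψ s)
    (hG0 : ∀ s, 0 ≤ G s) (hG : IntervalIntegrable G volume 0 c) (hK : 0 ≤ K)
    (hGK : ∀ h ∈ Icc a (2 ^ N * a), ∫ s in 0..h, G s ≤ K * h) :
    ∫ s in a..2 ^ N * a, ψ s * G s ≤ 4 * K * ∫ s in 0..c, ψ s := by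
  have hc : 0 ≤ c := (by positivity : (0 : ℝ) ≤ 2 ^ N * a).trans hNc
  have hψi : IntervalIntegrable ψ volume 0 c := (uIcc_of_le hc ▸ hψ).intervalIntegrable
  have hdouble : ∀ k < N, a ≤ 2 * (2 ^ k * a) ∧ 2 * (2 ^ k * a) ≤ 2 ^ N * a := fun k hk => by
    rw [← mul_assoc, ← pow_succ']
    exact le_two_pow_mul_le ha.le hk
  calc ∫ s in a..2 ^ N * a, ψ s * G s
      = ∑ k ∈ Finset.range N, ∫ s in 2 ^ k * a..2 * (2 ^ k * a), ψ s * G s :=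
        (sum_integral_dyadic_eq ha.le hNc (hψ.intervalIntegrable_mul hc hG)).symm
    _ ≤ ∑ k ∈ Finset.range N, 4 * K * ∫ s in 2 ^ k * a / 2..2 ^ k * a, ψ s := by
        refine Finset.sum_le_sum fun k hk => ?_
        have hk := hdouble k (Finset.mem_range.mp hk)
        have hkc : 2 * (2 ^ k * a) ≤ c := hk.2.trans hNc
        exact integral_mul_le_of_antitoneOn_block (by positivity)
          (hψ.mono (Icc_subset_Icc_right hkc)) (hψ0 _ ⟨by positivity, by linarith⟩) hG0
          (hG.mono_of_mem_Icc ⟨le_rfl, hc⟩ ⟨by positivity, hkc⟩) hK (hGK _ hk)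
    _ = 4 * K * ∫ s in a / 2..2 ^ N * (a / 2), ψ s := by
        rw [← Finset.mul_sum, ← sum_integral_dyadic_eq (by positivity) (by linarith) hψi]
        exact congrArg _ (Finset.sum_congr rfl fun k _ => by congr 1 <;> ring)
    _ ≤ 4 * K * ∫ s in 0..c, ψ s := by
        gcongr
        exact intervalIntegral.integral_mono_interval (by positivity)
          (le_two_pow_mul_le (by positivity) le_rfl).1 (by linarith)
          (ae_restrict_of_forall_mem measurableSet_Ioc fun s hs => hψ0 s ⟨hs.1.le, hs.2⟩) hψi

lemma integral_mul_le_of_antitoneOn {ψ G : ℝ → ℝ} {a η c K : ℝ} (ha : 0 < a) (haη : a ≤ η)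
    (hηc : 2 * η ≤ c) (hψ : AntitoneOn ψ (Icc 0 c)) (hψ0 : ∀ s ∈ Icc 0 c, 0 ≤ ψ s)
    (hG0 : ∀ s, 0 ≤ G s) (hG : IntervalIntegrable G volume 0 c) (hK : 0 ≤ K)
    (hGK : ∀ h ∈ Icc a (2 * η), ∫ s in 0..h, G s ≤ K * h) :
    ∫ s in a..c, ψ s * G s ≤ 4 * K * (∫ s in 0..c, ψ s) + ψ η * ∫ s in 0..c, G s := by
  obtain ⟨N, hN₁, hN₂⟩ := exists_nat_pow_near ((one_le_div ha).mpr haη) one_lt_two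
  set b := 2 ^ (N + 1) * a with hb
  have hηb : η < b := (div_lt_iff₀ ha).mp hN₂
  have hbη : b ≤ 2 * η := by
    rw [hb, pow_succ, mul_right_comm, mul_comm _ 2]
    exact mul_le_mul_of_nonneg_left ((le_div_iff₀ ha).mp hN₁) two_pos.le
  have hab : a ≤ b := haη.trans hηb.le
  have hbc : b ≤ c := hbη.trans hηc
  have hc : 0 ≤ c := by linarith
  have hψG : IntervalIntegrable (fun s => ψ s * G s) volume 0 c :=
    hψ.intervalIntegrable_mul hc hG
  have hGb : IntervalIntegrable G volume b c := hG.mono_of_mem_Icc ⟨by linarith, hbc⟩ ⟨hc, le_rfl⟩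
  have hdyadic : ∫ s in a..b, ψ s * G s ≤ 4 * K * ∫ s in 0..c, ψ s :=
    integral_mul_le_of_antitoneOn_dyadic ha hbc hψ hψ0 hG0 hG hK fun h hh =>
      hGK h ⟨hh.1, hh.2.trans hbη⟩
  have htail : ∫ s in b..c, ψ s * G s ≤ ψ η * ∫ s in 0..c, G s := calc
    ∫ s in b..c, ψ s * G s ≤ ∫ s in b..c, ψ η * G s := by
        refine intervalIntegral.integral_mono_on hbc
          (hψG.mono_of_mem_Icc ⟨by linarith, hbc⟩ ⟨hc, le_rfl⟩) (hGb.const_mul _) fun s hs => ?_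
        exact mul_le_mul_of_nonneg_right
          (hψ ⟨by linarith, by linarith⟩ ⟨by linarith [hs.1], hs.2⟩ (by linarith [hs.1])) (hG0 s)
    _ = ψ η * ∫ s in b..c, G s := intervalIntegral.integral_const_mul _ _
    _ ≤ ψ η * ∫ s in 0..c, G s := by
        gcongr
        · exact hψ0 η ⟨by linarith, by linarith⟩
        · exact intervalIntegral.integral_mono_interval (by linarith) hbc le_rfl
            (ae_of_all _ hG0) hG
  rw [← intervalIntegral.integral_add_adjacent_intervals
    (hψG.mono_of_mem_Icc ⟨ha.le, by linarith⟩ ⟨by linarith, hbc⟩)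
    (hψG.mono_of_mem_Icc ⟨by linarith, hbc⟩ ⟨hc, le_rfl⟩)]
  exact add_le_add hdyadic htail

lemma integral_mul_le_of_even_of_antitoneOn {ψ G : ℝ → ℝ} {a η c K C : ℝ} (ha : 0 < a)
    (haη : a ≤ η) (hηc : 2 * η ≤ c) (hψ_even : ∀ s, ψ (-s) = ψ s) (hψ0 : ∀ s, 0 ≤ ψ s)
    (hψ : AntitoneOn ψ (Icc 0 c)) (hG0 : ∀ s, 0 ≤ G s) (hGC : ∀ᵐ s, G s ≤ C)
    (hG : IntervalIntegrable G volume (-c) c) (hK : 0 ≤ K)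
    (hGK : ∀ h ∈ Icc a (2 * η), ∫ s in (-h)..h, G s ≤ K * h) :
    ∫ s in (-c)..c, ψ s * G s
      ≤ C * (∫ s in (-a)..a, ψ s) + 4 * K * (∫ s in (-c)..c, ψ s) + ψ η * ∫ s in (-c)..c, G s := by
  have hc : 0 ≤ c := by linarith
  have hψi : IntervalIntegrable ψ volume (-c) c := hψ.intervalIntegrable_of_even hc hψ_even
  have hψG : IntervalIntegrable (fun s => ψ s * G s) volume (-c) c :=
    hψ.intervalIntegrable_mul_of_even hc hψ_even hψ0 hG
  have hG_neg : IntervalIntegrable (fun s => G (-s)) volume 0 c := by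
    simpa using ((IntervalIntegrable.iff_comp_neg).mp
      (hG.mono_of_mem_Icc ⟨le_rfl, by linarith⟩ ⟨by linarith, hc⟩)).symm
  have hG_right : IntervalIntegrable G volume 0 c :=
    hG.mono_of_mem_Icc ⟨by linarith, hc⟩ ⟨by linarith, le_rfl⟩
  have hfold : ∀ h ∈ Icc 0 c, ∫ s in 0..h, (G s + G (-s)) = ∫ s in (-h)..h, G s := fun h hh => by
    rw [integral_symm_eq_add_integral_add_comp_neg le_rfl hh.1
      (hG.mono_of_mem_Icc ⟨by linarith [hh.2], by linarith [hh.1]⟩ ⟨by linarith [hh.1], hh.2⟩)]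
    simp
  have hinner : ∫ s in (-a)..a, ψ s * G s ≤ C * ∫ s in (-a)..a, ψ s := by
    rw [← intervalIntegral.integral_const_mul]
    refine intervalIntegral.integral_mono_ae (by linarith)
      (hψG.mono_of_mem_Icc ⟨by linarith, by linarith⟩ ⟨by linarith, by linarith⟩)
      ((hψi.mono_of_mem_Icc ⟨by linarith, by linarith⟩ ⟨by linarith, by linarith⟩).const_mul C) ?_
    filter_upwards [hGC] with s hs
    rw [mul_comm C]
    exact mul_le_mul_of_nonneg_left hs (hψ0 s)
  have houter := integral_mul_le_of_antitoneOn ha haη hηc hψ (fun s _ => hψ0 s)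
    (fun s => add_nonneg (hG0 s) (hG0 (-s))) (hG_right.add hG_neg) hK
    fun h hh => (hfold h ⟨by linarith [hh.1], by linarith [hh.2]⟩).trans_le (hGK h hh)
  have hψ_half : ∫ s in 0..c, ψ s ≤ ∫ s in (-c)..c, ψ s :=
    intervalIntegral.integral_mono_interval (by linarith) hc le_rfl (ae_of_all _ hψ0) hψi
  have hcongr : ∫ s in a..c, (ψ s * G s + ψ (-s) * G (-s)) = ∫ s in a..c, ψ s * (G s + G (-s)) :=
    intervalIntegral.integral_congr fun s _ => by simp only [hψ_even, mul_add]
  rw [hfold c ⟨hc, le_rfl⟩] at houter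
  rw [integral_symm_eq_add_integral_add_comp_neg ha.le (by linarith) hψG, hcongr]
  linarith [mul_le_mul_of_nonneg_left hψ_half (by positivity : (0 : ℝ) ≤ 4 * K)]

lemma integral_comp_sub_mul_eq_of_periodic {ψ f : ℝ → ℝ} {T : ℝ} (hψ : Function.Periodic ψ T)
    (hf : Function.Periodic f T) (θ a : ℝ) :
    ∫ t in a..a + T, ψ (θ - t) * f t = ∫ s in a..a + T, ψ s * f (θ - s) := by
  have hper : Function.Periodic (fun s => ψ s * f (θ - s)) T := hψ.mul (hf.const_sub θ)
  calc ∫ t in a..a + T, ψ (θ - t) * f t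
      = ∫ t in a..a + T, ψ (θ - t) * f (θ - (θ - t)) := by simp only [sub_sub_cancel]
    _ = ∫ s in θ - (a + T)..θ - (a + T) + T, ψ s * f (θ - s) := by
        rw [intervalIntegral.integral_comp_sub_left (fun s => ψ s * f (θ - s)) θ,
          show θ - (a + T) + T = θ - a by ring]
    _ = ∫ s in a..a + T, ψ s * f (θ - s) := hper.intervalIntegral_add_eq _ _

lemma abs_integral_mul_sub_le {ψ u : ℝ → ℝ} {a b y : ℝ} (hab : a ≤ b) (hψ0 : ∀ s, 0 ≤ ψ s)
    (hψ : IntervalIntegrable ψ volume a b)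
    (hψu : IntervalIntegrable (fun s => ψ s * u s) volume a b) :
    |(∫ s in a..b, ψ s * u s) - y|
      ≤ (∫ s in a..b, ψ s * |u s - y|) + |(∫ s in a..b, ψ s) - 1| * |y| := by
  have hsplit : (∫ s in a..b, ψ s * u s) - y
      = (∫ s in a..b, ψ s * (u s - y)) + ((∫ s in a..b, ψ s) - 1) * y := by
    simp only [mul_sub]
    rw [intervalIntegral.integral_sub hψu (hψ.mul_const y), intervalIntegral.integral_mul_const]
    ring
  have habs : |∫ s in a..b, ψ s * (u s - y)| ≤ ∫ s in a..b, ψ s * |u s - y| := by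
    refine (intervalIntegral.abs_integral_le_integral_abs hab).trans_eq ?_
    simp only [abs_mul, abs_of_nonneg (hψ0 _)]
  rw [hsplit, ← abs_mul]
  exact (abs_add_le _ _).trans (by linarith)

lemma integral_comp_sub_le_integral_comp_add {g : ℝ → ℝ} {θ x h d : ℝ} (hg0 : ∀ u, 0 ≤ g u)
    (hg : IntervalIntegrable g volume (x - (h + d)) (x + (h + d))) (hh : 0 ≤ h)
    (hθ : |θ - x| ≤ d) :
    ∫ s in (-h)..h, g (θ - s) ≤ ∫ t in (-(h + d))..(h + d), g (x + t) := by
  rw [intervalIntegral.integral_comp_sub_left g θ, intervalIntegral.integral_comp_add_left g x]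
  have := abs_le.mp hθ
  exact intervalIntegral.integral_mono_interval (by linarith) (by linarith) (by linarith)
    (ae_of_all _ hg0) (by simpa [sub_eq_add_neg] using hg)

lemma exists_integral_le_of_tendsto_average {G : ℝ → ℝ}
    (hG : Tendsto (fun h : ℝ => (1 / (2 * h)) * ∫ t in (-h)..h, G t) (𝓝[>] 0) (𝓝 0))
    {ε : ℝ} (hε : 0 < ε) : ∃ h₀ > 0, ∀ h ∈ Ioo 0 h₀, ∫ t in (-h)..h, G t ≤ ε * h := by
  obtain ⟨h₀, hh₀, hsub⟩ :=
    mem_nhdsGT_iff_exists_Ioo_subset.mp (hG.eventually (gt_mem_nhds (half_pos hε)))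
  refine ⟨h₀, hh₀, fun h hh => ?_⟩
  have havg : (1 / (2 * h)) * ∫ t in (-h)..h, G t < ε / 2 := hsub hh
  rw [one_div, inv_mul_lt_iff₀ (by linarith [hh.1])] at havg
  linarith

lemma eventually_integral_comp_sub_le_of_tendsto_average {g : ℝ → ℝ} {x δ ε : ℝ}
    (hg0 : ∀ u, 0 ≤ g u) (hg : ∀ u v, IntervalIntegrable g volume u v)
    (hLeb : Tendsto (fun h : ℝ => (1 / (2 * h)) * ∫ t in (-h)..h, g (x + t)) (𝓝[>] 0) (𝓝 0))
    (hδ : 0 < δ) (hε : 0 < ε) :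
    ∀ᶠ η in 𝓝[>] (0 : ℝ), ∀ θ d, 0 < d → |θ - x| ≤ d →
      ∀ h ∈ Icc (δ * d) (2 * η), ∫ s in (-h)..h, g (θ - s) ≤ ε * h := by
  set κ := 1 + δ⁻¹
  have hκ : 0 < κ := by positivity
  obtain ⟨h₀, hh₀, hx⟩ := exists_integral_le_of_tendsto_average hLeb (div_pos hε hκ)
  filter_upwards [Ioo_mem_nhdsGT (by positivity : 0 < h₀ / (2 * κ))] with η hη θ d hd hθ h hh
  have hdh : d ≤ δ⁻¹ * h := by rw [← div_eq_inv_mul, le_div_iff₀' hδ]; exact hh.1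
  have hh₀ : h + d < h₀ := by
    have := (lt_div_iff₀ (by positivity)).mp hη.2
    nlinarith [hh.2]
  calc ∫ s in (-h)..h, g (θ - s) ≤ ∫ t in (-(h + d))..(h + d), g (x + t) :=
        integral_comp_sub_le_integral_comp_add hg0 (hg _ _) (by nlinarith [hh.1]) hθ
    _ ≤ ε / κ * (h + d) := hx _ ⟨by nlinarith [hh.1], hh₀⟩
    _ ≤ ε / κ * (κ * h) := by gcongr; linarith
    _ = ε * h := by field_simp

lemma tendsto_apply_of_tendsto_sSup_abs {ι : Type*} {l : Filter ι} {φ : ι → ℝ → ℝ}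
    {η R t₀ : ℝ} (hη : η ≤ |t₀|) (hR : |t₀| ≤ R) (hbdd : ∀ᶠ r in l, ∃ M, ∀ t, |φ r t| ≤ M)
    (h : Tendsto (fun r => sSup {s : ℝ | ∃ t, η ≤ |t| ∧ |t| ≤ R ∧ s = |φ r t|}) l (𝓝 0)) :
    Tendsto (fun r => φ r t₀) l (𝓝 0) := by
  refine squeeze_zero_norm' (hbdd.mono fun r ⟨M, hM⟩ => ?_) h
  exact le_csSup ⟨M, fun s ⟨t, _, _, hs⟩ => hs ▸ hM t⟩ ⟨t₀, hη, hR, rfl⟩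

lemma abs_integral_periodic_conv_sub_le {ψ f : ℝ → ℝ} {c θ x a η K C : ℝ}
    (hψper : Function.Periodic ψ (2 * c)) (hψ_even : ∀ t, ψ (-t) = ψ t) (hψ0 : ∀ t, 0 ≤ ψ t)
    (hψ : AntitoneOn ψ (Icc 0 c)) (hfm : Measurable f) (hfper : Function.Periodic f (2 * c))
    (hfC : ∀ᵐ u, |f u - f x| ≤ C) (ha : 0 < a) (haη : a ≤ η) (hηc : 2 * η ≤ c) (hK : 0 ≤ K)
    (hwin : ∀ h ∈ Icc a (2 * η), ∫ s in (-h)..h, |f (θ - s) - f x| ≤ K * h) :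
    |(∫ t in (-c)..c, ψ (θ - t) * f t) - f x|
      ≤ C * (∫ s in (-a)..a, ψ s) + 4 * K * (∫ s in (-c)..c, ψ s) + 2 * c * C * ψ η
        + |(∫ s in (-c)..c, ψ s) - 1| * |f x| := by
  have hc : 0 ≤ c := by linarith
  have hfθm : Measurable fun s => f (θ - s) := hfm.comp (measurable_const.sub measurable_id)
  have hGC : ∀ᵐ s, |f (θ - s) - f x| ≤ C :=
    (Measure.measurePreserving_sub_left volume θ).quasiMeasurePreserving.ae hfC
  have hGm : Measurable fun s => |f (θ - s) - f x| := (hfθm.sub measurable_const).abs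
  have hG : IntervalIntegrable (fun s => |f (θ - s) - f x|) volume (-c) c :=
    hGm.intervalIntegrable_of_ae_abs_le (by simpa only [abs_abs] using hGC) _ _
  have hfθ : IntervalIntegrable (fun s => f (θ - s)) volume (-c) c := by
    refine hfθm.intervalIntegrable_of_ae_abs_le (K := C + |f x|) (hGC.mono fun s hs => ?_) _ _
    linarith [abs_sub_abs_le_abs_sub (f (θ - s)) (f x)]
  have hGint : ∫ s in (-c)..c, |f (θ - s) - f x| ≤ 2 * c * C := by
    have := intervalIntegral.integral_mono_ae (by linarith) hG intervalIntegrable_const hGC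
    rw [intervalIntegral.integral_const, smul_eq_mul] at this
    linarith
  have hconv := integral_comp_sub_mul_eq_of_periodic hψper hfper θ (-c)
  rw [show -c + 2 * c = c by ring] at hconv
  have hmain := integral_mul_le_of_even_of_antitoneOn ha haη hηc hψ_even hψ0 hψ
    (fun s => abs_nonneg _) hGC hG hK hwin
  rw [hconv]
  refine (abs_integral_mul_sub_le (by linarith) hψ0 (hψ.intervalIntegrable_of_even hc hψ_even)
    (hψ.intervalIntegrable_mul_of_even hc hψ_even hψ0 hfθ)).trans ?_
  linarith [mul_le_mul_of_nonneg_left hGint (hψ0 η)]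

theorem fatou_bounded_functions_gamma_zero_general
    (φ : ℝ → ℝ → ℝ) (lam : ℝ → ℝ)
    (hper : ∀ r ∈ Set.Ioo (0 : ℝ) 1, ∀ t, φ r (t + 2 * π) = φ r t)
    (hbdd : ∀ r ∈ Set.Ioo (0 : ℝ) 1, ∃ M, ∀ t, |φ r t| ≤ M)
    (hnonneg : ∀ r ∈ Set.Ioo (0 : ℝ) 1, ∀ t, 0 ≤ φ r t)
    (heven : ∀ r ∈ Set.Ioo (0 : ℝ) 1, ∀ t, φ r (-t) = φ r t)
    (hdec : ∀ r ∈ Set.Ioo (0 : ℝ) 1, AntitoneOn (φ r) (Set.Icc 0 π))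
    (hAI1 : Tendsto (fun r => ∫ t in (-π)..π, φ r t) (𝓝[<] (1 : ℝ)) (𝓝 1))
    (hAI2 : ∀ x ∈ Set.Ioo (0 : ℝ) π,
      Tendsto (fun r => sSup {s : ℝ | ∃ t, x ≤ |t| ∧ |t| ≤ π ∧ s = |φ r t|})
        (𝓝[<] (1 : ℝ)) (𝓝 0))
    (hlampos : ∀ r ∈ Set.Ioo (0 : ℝ) 1, 0 < lam r)
    (hlam0 : Tendsto lam (𝓝[<] (1 : ℝ)) (𝓝 0))
    -- `γ_λ = 0`, unfolded: the inner `limsup_δ sup_r` can be made `< ε` for `τ` near 1.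
    (hgamma : ∀ ε > 0, ∃ τ ∈ Set.Ioo (0 : ℝ) 1, ∃ δ₀ > 0, ∀ δ ∈ Set.Ioo 0 δ₀,
      ∀ r ∈ Set.Ioo τ 1, (∫ t in (-(δ * lam r))..(δ * lam r), φ r t) < ε)
    (f : ℝ → ℝ) (hfmeas : Measurable f)
    (hfbdd : ∃ C, ∀ᵐ t, |f t| ≤ C)
    (hfper : ∀ t, f (t + 2 * π) = f t)
    (x : ℝ)
    (hLeb : Tendsto (fun h : ℝ => (1 / (2 * h)) * ∫ t in (-h)..h, |f (x + t) - f x|)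
      (𝓝[>] (0 : ℝ)) (𝓝 0)) :
    ∀ ε > 0, ∀ᶠ r in 𝓝[<] (1 : ℝ), ∀ θ, |θ - x| ≤ lam r →
      |(∫ t in (-π)..π, φ r (θ - t) * f t) - f x| < ε := by
  intro ε hε
  obtain ⟨C, hC, hfC⟩ := exists_pos_ae_abs_sub_le hfbdd (f x)
  have hg : ∀ u v, IntervalIntegrable (fun u => |f u - f x|) volume u v :=
    (show Measurable fun u => |f u - f x| from (hfmeas.sub measurable_const).abs)
      |>.intervalIntegrable_of_ae_abs_le (by simpa only [abs_abs] using hfC)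
  obtain ⟨τ, hτ, δ₀, hδ₀, hγ⟩ := hgamma (ε / (4 * C)) (by positivity)
  obtain ⟨δ, hδ⟩ := nonempty_Ioo.mpr hδ₀
  obtain ⟨η, hwin, hη, hηπ⟩ := ((eventually_integral_comp_sub_le_of_tendsto_average
    (g := fun u => |f u - f x|) (fun _ => abs_nonneg _) hg hLeb hδ.1
    (by positivity : 0 < ε / 32)).and (Ioo_mem_nhdsGT (half_pos pi_pos))).exists
  have hε4 : 0 < ε / 4 := by positivity
  have hIoo : ∀ᶠ r in 𝓝[<] (1 : ℝ), r ∈ Ioo 0 1 := Ioo_mem_nhdsLT one_pos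
  have hkernel : Tendsto (fun r => 2 * π * C * φ r η) (𝓝[<] (1 : ℝ)) (𝓝 0) := by
    simpa using (tendsto_apply_of_tendsto_sSup_abs (abs_of_pos hη).ge
      ((abs_of_pos hη).trans_le (by linarith)) (hIoo.mono hbdd)
      (hAI2 η ⟨hη, by linarith⟩)).const_mul (2 * π * C)
  have hmass : Tendsto (fun r => |(∫ t in (-π)..π, φ r t) - 1| * |f x|) (𝓝[<] (1 : ℝ)) (𝓝 0) := by
    simpa using (hAI1.sub_const 1).abs.mul_const |f x|
  filter_upwards [hIoo, Ioo_mem_nhdsLT hτ.2, hlam0.eventually (gt_mem_nhds (div_pos hη hδ.1)),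
    hAI1.eventually (gt_mem_nhds one_lt_two), hkernel.eventually (gt_mem_nhds hε4),
    hmass.eventually (gt_mem_nhds hε4)] with r hr hrτ hlam hI_lt_two hkernel_lt hmass_lt θ hθ
  have ha : 0 < δ * lam r := mul_pos hδ.1 (hlampos r hr)
  have hest := abs_integral_periodic_conv_sub_le (hper r hr) (heven r hr) (hnonneg r hr)
    (hdec r hr) hfmeas hfper hfC ha ((lt_div_iff₀' hδ.1).mp hlam).le (by linarith)
    (by positivity) (hwin θ (lam r) (hlampos r hr) hθ)
  have hinner := (lt_div_iff₀ (by positivity)).mp (hγ δ hδ r hrτ)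
  have hmiddle := mul_lt_mul_of_pos_left hI_lt_two (by positivity : 0 < 4 * (ε / 32))
  linarith

/-- Theorem 5: for a regular approximation of identity of even kernels
with `γ_λ = 0`, the convolutions `Φ_r(θ, f)` of a bounded function `f`
`λ(r)`-converge to `f(x)` at every Lebesgue point `x`. -/
theorem fatou_bounded_functions_gamma_zero
    (φ : ℝ → ℝ → ℝ) (lam : ℝ → ℝ)
    (hmeas : ∀ r ∈ Set.Ioo (0 : ℝ) 1, Measurable (φ r))
    (hper : ∀ r ∈ Set.Ioo (0 : ℝ) 1, ∀ t, φ r (t + 2 * π) = φ r t)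
    (hbdd : ∀ r ∈ Set.Ioo (0 : ℝ) 1, ∃ M, ∀ t, |φ r t| ≤ M)
    (hnonneg : ∀ r ∈ Set.Ioo (0 : ℝ) 1, ∀ t, 0 ≤ φ r t)
    (heven : ∀ r ∈ Set.Ioo (0 : ℝ) 1, ∀ t, φ r (-t) = φ r t)
    (hdec : ∀ r ∈ Set.Ioo (0 : ℝ) 1, AntitoneOn (φ r) (Set.Icc 0 π))
    (hAI1 : Tendsto (fun r => ∫ t in (-π)..π, φ r t) (𝓝[<] (1 : ℝ)) (𝓝 1))
    (hAI2 : ∀ x ∈ Set.Ioo (0 : ℝ) π,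
      Tendsto (fun r => sSup {s : ℝ | ∃ t, x ≤ |t| ∧ |t| ≤ π ∧ s = |φ r t|})
        (𝓝[<] (1 : ℝ)) (𝓝 0))
    (hlampos : ∀ r ∈ Set.Ioo (0 : ℝ) 1, 0 < lam r)
    (hlam0 : Tendsto lam (𝓝[<] (1 : ℝ)) (𝓝 0))
    -- `γ_λ = 0`, unfolded: the inner `limsup_δ sup_r` can be made `< ε` for `τ` near 1.
    (hgamma : ∀ ε > 0, ∃ τ ∈ Set.Ioo (0 : ℝ) 1, ∃ δ₀ > 0, ∀ δ ∈ Set.Ioo 0 δ₀,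
      ∀ r ∈ Set.Ioo τ 1, (∫ t in (-(δ * lam r))..(δ * lam r), φ r t) < ε)
    (f : ℝ → ℝ) (hfmeas : Measurable f)
    (hfbdd : ∃ C, ∀ᵐ t, |f t| ≤ C)
    (hfper : ∀ t, f (t + 2 * π) = f t)
    (x : ℝ)
    (hLeb : Tendsto (fun h : ℝ => (1 / (2 * h)) * ∫ t in (-h)..h, |f (x + t) - f x|)
      (𝓝[>] (0 : ℝ)) (𝓝 0)) :
    ∀ ε > 0, ∀ᶠ r in 𝓝[<] (1 : ℝ), ∀ θ, |θ - x| ≤ lam r →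
      |(∫ t in (-π)..π, φ r (θ - t) * f t) - f x| < ε :=
  fatou_bounded_functions_gamma_zero_general φ lam hper hbdd hnonneg heven hdec hAI1 hAI2 hlampos
    hlam0 hgamma f hfmeas hfbdd hfper x hLeb
end
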